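/- arXiv:2202.07981 — 11 statements merged into one kernel-verified Lean document; each statement's English description precedes it below -/
import Mathlib

section
/- Let Σ be a finite alphabet with σ := |Σ| ≥ 2 and let k ≥ 1. If w ∈ Σ* is nearly k-universal, then the universality index of w satisfies ι(w) = k − 1 and the rest of the arch factorization satisfies |alph(r(w))| = σ − 1. -/
/-- The set of scattered factors (subsequences) of `w` of length `k`. -/
def ScatFact {α : Type*} (k : ℕ) (w : List α) : Set (List α) :=
  {u | u.length = k ∧ u.Sublist w}

/-- `w` is nearly `k`-universal: exactly one word of length `k` is not
a scattered factor of `w`. -/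
def NearlyUniv (α : Type*) [Fintype α] (k : ℕ) (w : List α) : Prop :=
  (ScatFact k w).ncard = Fintype.card α ^ k - 1

/-- Auxiliary function computing the arch factorization: given enough fuel,
returns the list of arches together with the rest. Each arch is the shortest
prefix of the remaining suffix containing every letter of the alphabet. -/
noncomputable def archesAux {α : Type*} [Fintype α] [DecidableEq α] :
    ℕ → List α → List (List α) × List α
  | 0, w => ([], w)
  | (fuel+1), w =>
    if (Finset.univ : Finset α) ⊆ w.toFinset then
      let n := sInf {n | (Finset.univ : Finset α) ⊆ (w.take n).toFinset}
      let q := archesAux fuel (w.drop n)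
      ((w.take n) :: q.1, q.2)
    else ([], w)

/-- The list of arches of the arch factorization of `w`. -/
noncomputable def archList {α : Type*} [Fintype α] [DecidableEq α] (w : List α) :
    List (List α) :=
  (archesAux w.length w).1

/-- The rest `r(w)` of the arch factorization of `w`. -/
noncomputable def rest {α : Type*} [Fintype α] [DecidableEq α] (w : List α) : List α :=
  (archesAux w.length w).2

/-- The universality index `ι(w)`: the number of arches of `w`. -/
noncomputable def iota {α : Type*} [Fintype α] [DecidableEq α] (w : List α) : ℕ :=
  (archList w).length

/-- The `i`-th arch `ar_i(w)` (1-indexed). -/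
noncomputable def arch {α : Type*} [Fintype α] [DecidableEq α] (w : List α) (i : ℕ) :
    List α :=
  (archList w).getD (i-1) []

/-- The modus `m(w)`: the word of the last letters of the arches of `w`. -/
noncomputable def modus {α : Type*} [Fintype α] [DecidableEq α] (w : List α) : List α :=
  (archList w).filterMap List.getLast?

/-- `alph v` is the set of letters occurring in `v`. -/
def alph {α : Type*} [DecidableEq α] (v : List α) : Finset α := v.toFinset

/-- `w` is perfectly `m`-universal: both `w` and its reversal decompose into
exactly `m` arches with empty rest. -/
def PerfUniv {α : Type*} [Fintype α] [DecidableEq α] (m : ℕ) (w : List α) : Prop :=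
  iota w = m ∧ iota w.reverse = m ∧ rest w = [] ∧ rest w.reverse = []


section Aux
open List
variable {α : Type*} [Fintype α] [DecidableEq α]

lemma key_sublist' {c : α} {t b s : List α} (hc : c ∉ b) (h : (c :: t) <+ b ++ s) :
    (c :: t) <+ s := by
  induction b with
  | nil => simpa using h
  | cons x b ih =>
    simp only [List.mem_cons, not_or] at hc
    cases h with
    | cons _ h' => exact ih hc.2 h'
    | cons_cons _ h' => exact absurd rfl hc.1

lemma key_sublist {c : α} {t b s : List α} (hc : c ∉ b) (h : (c :: t) <+ (b ++ [c]) ++ s) :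
    t <+ s := by
  rw [List.append_assoc] at h
  have := key_sublist' hc h
  simpa using this

lemma aux_spec [Nonempty α] :
    ∀ (fuel : ℕ) (w : List α), w.length ≤ fuel →
    (∀ u : List α, u.length ≤ (archesAux fuel w).1.length → u <+ w) ∧
    (∀ a : α, a ∉ (archesAux fuel w).2.toFinset →
      ¬ ((archesAux fuel w).1.filterMap List.getLast? ++ [a]) <+ w) ∧
    ¬ (Finset.univ : Finset α) ⊆ (archesAux fuel w).2.toFinset ∧
    ((archesAux fuel w).1.filterMap List.getLast?).length = (archesAux fuel w).1.length := by
  intro fuel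
  induction fuel with
  | zero =>
    intro w hw
    have hw0 : w = [] := List.eq_nil_of_length_eq_zero (Nat.le_zero.mp hw)
    subst hw0
    refine ⟨?_, ?_, ?_, rfl⟩
    · intro u hu
      simp only [archesAux] at hu
      simp at hu
      simp [hu]
    · intro a _ h
      simp [archesAux] at h
    · simp [archesAux]
      exact Finset.univ_nonempty.ne_empty
  | succ fuel ih =>
    intro w hw
    by_cases hcov : (Finset.univ : Finset α) ⊆ w.toFinset
    · -- covered case
      set S : Set ℕ := {n | (Finset.univ : Finset α) ⊆ (w.take n).toFinset} with hS
      have hlenS : w.length ∈ S := by simpa [hS] using hcov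
      set n := sInf S with hn
      have hnS : n ∈ S := Nat.sInf_mem ⟨_, hlenS⟩
      have hnle : n ≤ w.length := Nat.sInf_le hlenS
      have hn0 : n ≠ 0 := by
        intro h0
        rw [h0] at hnS
        obtain ⟨a⟩ := ‹Nonempty α›
        exact absurd (hnS (Finset.mem_univ a)) (by simp)
      obtain ⟨m, hm⟩ : ∃ m, n = m + 1 := ⟨n - 1, by omega⟩
      have hmlt : m < w.length := by omega
      have hmS : m ∉ S := Nat.notMem_of_lt_sInf (by omega)
      have htake : w.take n = w.take m ++ [w[m]] := by
        rw [hm, List.take_succ]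
        simp [List.getElem?_eq_getElem hmlt]
      set c := w[m] with hc
      have hcnot : c ∉ w.take m := by
        intro hmem
        apply hmS
        intro x hx
        have hx2 : x ∈ (w.take n).toFinset := hnS hx
        rw [htake] at hx2
        simp only [List.toFinset_append, Finset.mem_union, List.mem_toFinset] at hx2 ⊢
        rcases hx2 with h | h
        · exact h
        · simp at h; rw [h]; exact hmem
      have heq : archesAux (fuel + 1) w =
          ((w.take n) :: (archesAux fuel (w.drop n)).1, (archesAux fuel (w.drop n)).2) := by
        rw [archesAux]
        simp only [if_pos hcov]
        rfl
      have hdlen : (w.drop n).length ≤ fuel := by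
        rw [List.length_drop]; omega
      obtain ⟨ih1, ih2, ih3, ih4⟩ := ih (w.drop n) hdlen
      have hlast : (w.take n).getLast? = some c := by
        rw [htake]; exact List.getLast?_concat
      have hdecomp : w.take n ++ w.drop n = w := List.take_append_drop n w
      refine ⟨?_, ?_, ?_, ?_⟩
      · intro u hu
        rw [heq] at hu
        simp only [List.length_cons] at hu
        match u with
        | [] => exact List.nil_sublist w
        | x :: t =>
          have hu' : t.length ≤ (archesAux fuel (w.drop n)).1.length := by
            simp only [List.length_cons] at hu; omega
          have hx : x ∈ w.take n := by
            have := hnS (Finset.mem_univ x)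
            simpa using this
          have ht : t <+ w.drop n := ih1 t hu'

          calc (x :: t) = [x] ++ t := rfl
            _ <+ w.take n ++ w.drop n := List.Sublist.append
                (List.singleton_sublist.mpr hx) ht
            _ = w := hdecomp
      · intro a ha h
        rw [heq] at ha h
        simp only [List.filterMap_cons, hlast] at h
        rw [← hdecomp] at h
        have h' : ((archesAux fuel (w.drop n)).1.filterMap List.getLast? ++ [a]) <+ w.drop n := by
          apply key_sublist hcnot
          rw [← htake]
          simpa using h
        exact ih2 a ha h'
      · rw [heq]; exact ih3
      · rw [heq]
        simp only [List.filterMap_cons, hlast, List.length_cons]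
        rw [ih4]
    · have heq : archesAux (fuel + 1) w = ([], w) := by
        rw [archesAux]; simp only [if_neg hcov]
      rw [heq]
      refine ⟨?_, ?_, hcov, rfl⟩
      · intro u hu
        simp at hu
        simp [hu]
      · intro a ha h
        simp only [List.filterMap_nil, List.nil_append] at h
        exact ha (List.mem_toFinset.mpr (List.singleton_sublist.mp h))

lemma ncard_len (k : ℕ) : {u : List α | u.length = k}.ncard = Fintype.card α ^ k := by
  rw [← Nat.card_coe_set_eq]
  rw [show Nat.card ↥{u : List α | u.length = k} = Nat.card (List.Vector α k) from rfl]
  rw [Nat.card_eq_fintype_card, card_vector]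

end Aux


/-- If `w` is nearly `k`-universal then `ι(w) = k - 1` and `|alph(r(w))| = σ - 1`. -/
theorem stmt_0 {α : Type*} [Fintype α] [DecidableEq α]
    (hσ : 2 ≤ Fintype.card α) {k : ℕ} (hk : 1 ≤ k)
    (w : List α) (hw : NearlyUniv α k w) :
    iota w = k - 1 ∧ (alph (rest w)).card = Fintype.card α - 1 := by
  have hne : Nonempty α := Fintype.card_pos_iff.mp (by omega)
  obtain ⟨huniv, hmod, hrest, hmlen⟩ := aux_spec w.length w le_rfl
  have hml : (modus w).length = iota w := hmlen
  have hnotsub : ∀ a ∉ (rest w).toFinset, ¬ (modus w ++ [a]).Sublist w := hmod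
  have hiuniv : ∀ u : List α, u.length ≤ iota w → u.Sublist w := huniv
  -- counting
  have hTfin : {u : List α | u.length = k}.Finite := List.finite_length_eq α k
  have hsub : ScatFact k w ⊆ {u : List α | u.length = k} := fun u hu => hu.1
  have hcount := Set.ncard_diff_add_ncard_of_subset hsub hTfin
  rw [ncard_len] at hcount
  have hw' : (ScatFact k w).ncard = Fintype.card α ^ k - 1 := hw
  have hσk : 2 ≤ Fintype.card α ^ k :=
    le_trans (by omega : 2 ≤ Fintype.card α) (Nat.le_self_pow (by omega) _)
  have hM1 : ({u : List α | u.length = k} \ ScatFact k w).ncard = 1 := by omega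
  obtain ⟨v₀, hv₀⟩ := Set.ncard_eq_one.mp hM1
  have hmem : ∀ u : List α, u.length = k → ¬ u.Sublist w → u = v₀ := by
    intro u hl hs
    have hu : u ∈ {u : List α | u.length = k} \ ScatFact k w :=
      ⟨hl, fun hc => hs hc.2⟩
    rw [hv₀] at hu
    exact hu
  have hv₀mem : v₀.length = k ∧ ¬ v₀.Sublist w := by
    have hv : v₀ ∈ {u : List α | u.length = k} \ ScatFact k w := by
      rw [hv₀]; exact rfl
    exact ⟨hv.1, fun h => hv.2 ⟨hv.1, h⟩⟩
  have hmk : iota w < k := by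
    by_contra h
    push_neg at h
    exact hv₀mem.2 (hiuniv v₀ (le_trans (le_of_eq hv₀mem.1) h))
  obtain ⟨a₀, _, ha₀⟩ := Finset.not_subset.mp hrest
  have hkm : k ≤ iota w + 1 := by
    by_contra hlt
    push_neg at hlt
    obtain ⟨x, y, hxy⟩ := Fintype.exists_pair_of_one_lt_card (α := α) (by omega)
    have hlen2 : ∀ z : α,
        ((modus w ++ [a₀]) ++ List.replicate (k - iota w - 1) z).length = k := by
      intro z; simp [hml]; omega
    have hns : ∀ z : α, ¬ ((modus w ++ [a₀]) ++ List.replicate (k - iota w - 1) z).Sublist w :=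
      fun z hs => hnotsub a₀ ha₀ ((List.sublist_append_left _ _).trans hs)
    have hx := hmem _ (hlen2 x) (hns x)
    have hy := hmem _ (hlen2 y) (hns y)
    rw [← hy] at hx
    exact hxy (List.replicate_right_injective (by omega) (List.append_cancel_left hx))
  have hm : iota w = k - 1 := by omega
  have huniq : ∀ a ∉ (rest w).toFinset, a = a₀ := by
    intro a ha
    have h1 := hmem (modus w ++ [a]) (by simp [hml]; omega) (hnotsub a ha)
    have h2 := hmem (modus w ++ [a₀]) (by simp [hml]; omega) (hnotsub a₀ ha₀)
    rw [← h2] at h1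
    have := List.append_cancel_left h1
    simpa using this
  have hC : Finset.univ \ (rest w).toFinset = {a₀} := by
    ext b
    simp only [Finset.mem_sdiff, Finset.mem_univ, true_and, Finset.mem_singleton]
    constructor
    · exact huniq b
    · rintro rfl; exact ha₀
  have hcard := congrArg Finset.card hC
  rw [Finset.card_sdiff_of_subset (Finset.subset_univ _), Finset.card_singleton,
    Finset.card_univ] at hcard
  have hle : ((rest w).toFinset).card ≤ Fintype.card α := Finset.card_le_univ _
  exact ⟨hm, by show ((rest w).toFinset).card = Fintype.card α - 1; omega⟩
end

section
/- Let Σ be a finite alphabet with σ := |Σ| ≥ 2 and let k ≥ 1. Every nearly k-universal word w ∈ Σ* has length |w| ≥ kσ − 1. Moreover, for every nearly k-universal word w there is a unique letter a_w ∈ Σ with alph(r(w)) = Σ∖{a_w}. -/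
section Aux
variable {α : Type*} [Fintype α] [DecidableEq α]

lemma not_univ_subset_nil [Nonempty α] : ¬ (Finset.univ : Finset α) ⊆ ([] : List α).toFinset := by
  intro hsub
  have := hsub (Finset.mem_univ (Classical.arbitrary α))
  simp at this

lemma sInf_pos [Nonempty α] {w : List α} (hc : (Finset.univ : Finset α) ⊆ w.toFinset) :
    1 ≤ sInf {n | (Finset.univ : Finset α) ⊆ (w.take n).toFinset} := by
  have hne : ({n | (Finset.univ : Finset α) ⊆ (w.take n).toFinset} : Set ℕ).Nonempty :=
    ⟨w.length, by simpa [List.take_length] using hc⟩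
  have hmem := Nat.sInf_mem hne
  rcases Nat.eq_zero_or_pos (sInf {n | (Finset.univ : Finset α) ⊆ (w.take n).toFinset}) with h | h
  · rw [h] at hmem
    simp only [Set.mem_setOf_eq, List.take_zero] at hmem
    exact absurd hmem not_univ_subset_nil
  · exact h

lemma archesAux_step [Nonempty α] :
    ∀ fuel (w : List α), w.length ≤ fuel → archesAux (fuel+1) w = archesAux fuel w := by
  intro fuel
  induction fuel with
  | zero =>
    intro w h
    have hw : w = [] := List.length_eq_zero_iff.mp (by omega)
    subst hw
    simp [archesAux, not_univ_subset_nil, (Finset.univ_nonempty (α := α)).ne_empty]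
  | succ f ih =>
    intro w h
    by_cases hc : (Finset.univ : Finset α) ⊆ w.toFinset
    · have hn1 : 1 ≤ sInf {n | (Finset.univ : Finset α) ⊆ (w.take n).toFinset} := sInf_pos hc
      rw [archesAux, archesAux, if_pos hc, if_pos hc]
      simp only
      rw [ih (w.drop (sInf {n | (Finset.univ : Finset α) ⊆ (w.take n).toFinset}))
        (by rw [List.length_drop]; omega)]
    · rw [archesAux, archesAux, if_neg hc, if_neg hc]

lemma archesAux_fuel [Nonempty α] (fuel : ℕ) (w : List α) (h : w.length ≤ fuel) :
    archesAux fuel w = archesAux w.length w := by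
  obtain ⟨d, rfl⟩ : ∃ d, fuel = w.length + d := ⟨fuel - w.length, by omega⟩
  induction d with
  | zero => rfl
  | succ d ih => rw [← Nat.add_assoc, archesAux_step _ _ (by omega), ih (by omega)]



lemma arch_neg [Nonempty α] (w : List α) (hc : ¬ (Finset.univ : Finset α) ⊆ w.toFinset) :
    archList w = [] ∧ rest w = w := by
  cases w with
  | nil => simp [archList, rest, archesAux]
  | cons x t =>
    unfold archList rest
    rw [show (x::t).length = t.length + 1 from rfl, archesAux, if_neg hc]
    exact ⟨rfl, rfl⟩

lemma arch_pos [Nonempty α] (w : List α) (hc : (Finset.univ : Finset α) ⊆ w.toFinset) :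
    archList w = w.take (sInf {n | (Finset.univ : Finset α) ⊆ (w.take n).toFinset}) ::
      archList (w.drop (sInf {n | (Finset.univ : Finset α) ⊆ (w.take n).toFinset})) ∧
    rest w = rest (w.drop (sInf {n | (Finset.univ : Finset α) ⊆ (w.take n).toFinset})) := by
  have hwne : w ≠ [] := by
    rintro rfl; exact not_univ_subset_nil hc
  obtain ⟨len, hlen⟩ : ∃ l, w.length = l + 1 :=
    ⟨w.length - 1, by have := List.length_pos_iff.mpr hwne; omega⟩
  have hn1 : 1 ≤ sInf {n | (Finset.univ : Finset α) ⊆ (w.take n).toFinset} := sInf_pos hc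
  have hrec : archesAux len
      (w.drop (sInf {n | (Finset.univ : Finset α) ⊆ (w.take n).toFinset})) =
      archesAux (w.drop (sInf {n | (Finset.univ : Finset α) ⊆ (w.take n).toFinset})).length
      (w.drop (sInf {n | (Finset.univ : Finset α) ⊆ (w.take n).toFinset})) :=
    archesAux_fuel _ _ (by rw [List.length_drop]; omega)
  unfold archList rest
  rw [hlen, archesAux, if_pos hc]
  simp only
  rw [hrec]
  exact ⟨rfl, rfl⟩

lemma arch_last [Nonempty α] {w : List α} (hc : (Finset.univ : Finset α) ⊆ w.toFinset) :
    ∃ m, sInf {n | (Finset.univ : Finset α) ⊆ (w.take n).toFinset} = m + 1 ∧ ∃ c,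
      w.take (m+1) = w.take m ++ [c] ∧ c ∉ w.take m := by
  have hne : ({n | (Finset.univ : Finset α) ⊆ (w.take n).toFinset} : Set ℕ).Nonempty :=
    ⟨w.length, by simpa [List.take_length] using hc⟩
  have hmem := Nat.sInf_mem hne
  have h1 := sInf_pos hc
  have hle : sInf {n | (Finset.univ : Finset α) ⊆ (w.take n).toFinset} ≤ w.length :=
    Nat.sInf_le (by simpa [List.take_length] using hc)
  obtain ⟨m, hm0⟩ := Nat.exists_eq_add_of_le h1
  have hm : sInf {n | (Finset.univ : Finset α) ⊆ (w.take n).toFinset} = m + 1 := by omega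
  have hmlt : m < w.length := by omega
  have hgetm : w[m]? = some w[m] := List.getElem?_eq_getElem hmlt
  have htake : w.take (m+1) = w.take m ++ [w[m]] := by
    rw [List.take_succ, hgetm]; rfl
  have hmin : ¬ (Finset.univ : Finset α) ⊆ (w.take m).toFinset :=
    Nat.notMem_of_lt_sInf (s := {n | (Finset.univ : Finset α) ⊆ (w.take n).toFinset}) (by omega)
  refine ⟨m, hm, w[m], htake, fun hmem' => hmin ?_⟩
  intro x _
  have hx : x ∈ (w.take (m+1)).toFinset := by
    rw [← hm]; exact hmem (Finset.mem_univ x)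
  rw [htake] at hx
  simp only [List.toFinset_append, Finset.mem_union, List.toFinset_cons, List.toFinset_nil] at hx
  rcases hx with hx | hx
  · exact hx
  · simp only [insert_empty_eq, Finset.mem_singleton] at hx
    subst hx
    exact List.mem_toFinset.mpr hmem'

lemma main [Nonempty α] : ∀ (N : ℕ) (w : List α), w.length ≤ N →
    ((archList w).flatten ++ rest w = w ∧
     (∀ A ∈ archList w, (Finset.univ : Finset α) ⊆ A.toFinset) ∧
     ¬ (Finset.univ : Finset α) ⊆ (rest w).toFinset ∧
     (modus w).length = (archList w).length ∧
     (∀ b, b ∉ (rest w).toFinset → ¬ (modus w ++ [b]).Sublist w) ∧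
     (∀ u : List α, u.length ≤ (archList w).length → u.Sublist w)) := by
  intro N
  induction N with
  | zero =>
    intro w h
    have hw : w = [] := List.length_eq_zero_iff.mp (by omega)
    subst hw
    obtain ⟨h1, h2⟩ := arch_neg ([] : List α) not_univ_subset_nil
    refine ⟨by rw [h1, h2]; rfl, by rw [h1]; simp, by rw [h2]; exact not_univ_subset_nil, ?_, ?_, ?_⟩
    · rw [modus, h1]; rfl
    · intro b hb hs
      rw [h2] at hb
      rw [modus, h1] at hs
      simp only [List.filterMap_nil, List.nil_append, List.singleton_sublist] at hs
      exact hb (List.mem_toFinset.mpr hs)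
    · intro u hu
      rw [h1] at hu
      simp only [List.length_nil, Nat.le_zero, List.length_eq_zero_iff] at hu
      subst hu; exact List.nil_sublist _
  | succ N ih =>
    intro w hN
    by_cases hc : (Finset.univ : Finset α) ⊆ w.toFinset
    · obtain ⟨hAL, hR⟩ := arch_pos w hc
      obtain ⟨m, hm, c, htake, hc_notmem⟩ := arch_last hc
      set n := sInf {n | (Finset.univ : Finset α) ⊆ (w.take n).toFinset} with hn_def
      have hn1 : 1 ≤ n := sInf_pos hc
      have hne : ({n | (Finset.univ : Finset α) ⊆ (w.take n).toFinset} : Set ℕ).Nonempty :=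
        ⟨w.length, by simpa [List.take_length] using hc⟩
      have hmemA : (Finset.univ : Finset α) ⊆ (w.take n).toFinset := Nat.sInf_mem hne
      have hwne : w ≠ [] := by rintro rfl; exact not_univ_subset_nil hc
      have hwpos : 0 < w.length := List.length_pos_iff.mpr hwne
      set w' := w.drop n with hw'_def
      have hlen' : w'.length ≤ N := by
        rw [hw'_def, List.length_drop]; omega
      obtain ⟨ih1, ih2, ih3, ih4, ih5, ih6⟩ := ih w' hlen'
      have hsplit : w.take n ++ w' = w := List.take_append_drop n w
      have hA_eq : w.take n = w.take m ++ [c] := by rw [hm]; exact htake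
      have hlast : (w.take n).getLast? = some c := by rw [hA_eq]; exact List.getLast?_concat
      have hmodus : modus w = c :: modus w' := by
        rw [modus, hAL, List.filterMap_cons, hlast]; rfl
      refine ⟨?_, ?_, ?_, ?_, ?_, ?_⟩
      · rw [hAL, hR, List.flatten_cons, List.append_assoc, ih1]
        exact hsplit
      · intro B hB
        rw [hAL] at hB
        rcases List.mem_cons.mp hB with rfl | hB
        · exact hmemA
        · exact ih2 B hB
      · rw [hR]; exact ih3
      · rw [hmodus, hAL]
        simp [ih4]
      · intro b hb hs
        rw [hR] at hb
        rw [hmodus] at hs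
        have hw_shape := hsplit
        rw [hA_eq, List.append_assoc, List.singleton_append] at hw_shape
        rw [← hw_shape] at hs
        have hs' : (c :: (modus w' ++ [b])).Sublist (w.take m ++ (c :: w')) := hs
        obtain ⟨l1, l2, heq, h1, h2⟩ := List.sublist_append_iff.mp hs'
        cases l1 with
        | nil =>
          rw [List.nil_append] at heq
          rw [← heq] at h2
          exact ih5 b hb (List.cons_sublist_cons.mp h2)
        | cons x t =>
          have hx : x = c := by
            have := heq
            simp only [List.cons_append, List.cons.injEq] at this
            exact this.1.symm
          exact hc_notmem (hx ▸ h1.subset (List.mem_cons_self (a := x) (l := t)))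
      · intro u hu
        rw [hAL] at hu
        cases u with
        | nil => exact List.nil_sublist _
        | cons x u' =>
          have hx : x ∈ w.take n := List.mem_toFinset.mp (hmemA (Finset.mem_univ x))
          have hu' : u'.Sublist w' := ih6 u' (by
            simp only [List.length_cons] at hu; omega)
          have : (x :: u') = [x] ++ u' := rfl
          rw [this, ← hsplit]
          exact (List.singleton_sublist.mpr hx).append hu'
    · obtain ⟨h1, h2⟩ := arch_neg w hc
      refine ⟨by rw [h1, h2]; rfl, by rw [h1]; simp, by rw [h2]; exact hc, ?_, ?_, ?_⟩
      · rw [modus, h1]; rfl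
      · intro b hb hs
        rw [h2] at hb
        rw [modus, h1] at hs
        simp only [List.filterMap_nil, List.nil_append, List.singleton_sublist] at hs
        exact hb (List.mem_toFinset.mpr hs)
      · intro u hu
        rw [h1] at hu
        simp only [List.length_nil, Nat.le_zero, List.length_eq_zero_iff] at hu
        subst hu; exact List.nil_sublist _



lemma unique_missing {k : ℕ} {w : List α} (hσ : 1 ≤ Fintype.card α)
    (hw : (ScatFact k w).ncard = Fintype.card α ^ k - 1) :
    ∃! u : List α, u.length = k ∧ ¬ u.Sublist w := by
  set U : Set (List α) := {u | u.length = k} with hU_def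
  have hUr : U = Set.range (fun v : List.Vector α k => v.toList) := by
    ext u
    constructor
    · intro hu; exact ⟨⟨u, hu⟩, rfl⟩
    · rintro ⟨v, rfl⟩; exact v.2
  have hUfin : U.Finite := by rw [hUr]; exact Set.finite_range _
  have hUcard : U.ncard = Fintype.card α ^ k := by
    rw [← Nat.card_coe_set_eq, hUr,
      Nat.card_range_of_injective List.Vector.toList_injective,
      Nat.card_eq_fintype_card, card_vector]
  have hSU : ScatFact k w ⊆ U := fun u hu => hu.1
  have hpow : 1 ≤ Fintype.card α ^ k := Nat.one_le_pow _ _ (by omega)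
  have hD : (U \ ScatFact k w).ncard = 1 := by
    rw [Set.ncard_diff hSU (hUfin.subset hSU), hUcard, hw]
    omega
  obtain ⟨u0, hu0⟩ := Set.ncard_eq_one.mp hD
  have hu0mem : u0 ∈ U \ ScatFact k w := by rw [hu0]; exact rfl
  refine ⟨u0, ⟨hu0mem.1, fun hsub => hu0mem.2 ⟨hu0mem.1, hsub⟩⟩, ?_⟩
  rintro u ⟨hlen, hnsub⟩
  have : u ∈ U \ ScatFact k w := ⟨hlen, fun hu => hnsub hu.2⟩
  rw [hu0] at this
  exact this


end Aux

/-- Every nearly `k`-universal word has length at least `k·σ - 1`, and there is a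
unique letter `a` with `alph(r(w)) = Σ \ {a}`. -/
theorem stmt_1 {α : Type*} [Fintype α] [DecidableEq α]
    (hσ : 2 ≤ Fintype.card α) {k : ℕ} (hk : 1 ≤ k)
    (w : List α) (hw : NearlyUniv α k w) :
    k * Fintype.card α - 1 ≤ w.length ∧
    ∃! a : α, alph (rest w) = Finset.univ \ {a} := by
  have hNe : Nonempty α := Fintype.card_pos_iff.mp (by omega)
  obtain ⟨hjoin, harch, hrest, hmod, hG, hU⟩ := main w.length w le_rfl
  obtain ⟨u0, ⟨hu0len, hu0nsub⟩, huniq⟩ := unique_missing (by omega) hw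
  set σ := Fintype.card α with hσ_def
  set m := (archList w).length with hm_def
  obtain ⟨a, -, ha⟩ := Finset.not_subset.mp hrest
  -- k ≤ m + 1
  have hk_le : k ≤ m + 1 := by
    by_contra hcon
    push_neg at hcon
    obtain ⟨x, y, hxy⟩ := Fintype.exists_pair_of_one_lt_card (α := α) (by omega)
    have hmodlen : (modus w).length = m := hmod
    have hnsub : ∀ z : α, ¬ ((modus w ++ [a]) ++ List.replicate (k - m - 1) z).Sublist w := by
      intro z hs
      exact hG a ha (((List.sublist_append_left _ _)).trans hs)
    have hlenz : ∀ z : α, ((modus w ++ [a]) ++ List.replicate (k - m - 1) z).length = k := by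
      intro z
      simp [List.length_replicate, hmodlen]
      omega
    have hx := huniq _ ⟨hlenz x, hnsub x⟩
    have hy := huniq _ ⟨hlenz y, hnsub y⟩
    rw [← hy] at hx
    have := List.append_cancel_left hx
    have hxmem : x ∈ List.replicate (k - m - 1) x := by
      apply List.mem_replicate.mpr
      exact ⟨by omega, rfl⟩
    rw [this] at hxmem
    exact hxy (List.eq_of_mem_replicate hxmem)
  -- m + 1 ≤ k
  have hk_ge : m + 1 ≤ k := by
    by_contra hcon
    push_neg at hcon
    exact hu0nsub (hU u0 (by omega))
  have hkm : k = m + 1 := by omega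
  -- key: unique missing letter
  have key : ∀ x, x ∉ (rest w).toFinset → x = a := by
    intro x hx
    by_contra hne
    have h1 := huniq _ ⟨by simp [hmod]; omega, hG x hx⟩
    have h2 := huniq _ ⟨by simp [hmod]; omega, hG a ha⟩
    rw [← h2] at h1
    have := List.append_cancel_left h1
    simp at this
    exact hne this
  have halph : alph (rest w) = Finset.univ \ {a} := by
    ext x
    simp only [alph, Finset.mem_sdiff, Finset.mem_univ, Finset.mem_singleton, true_and]
    constructor
    · intro hx
      rintro rfl
      exact ha hx
    · intro hx
      by_contra hx'
      exact hx (key x hx')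
  constructor
  · -- length bound
    have hjlen : w.length = ((archList w).map List.length).sum + (rest w).length := by
      conv_lhs => rw [← hjoin]
      simp [List.length_flatten]
    have hsum : m * σ ≤ ((archList w).map List.length).sum := by
      have := List.card_nsmul_le_sum ((archList w).map List.length) σ (by
        intro x hx
        obtain ⟨A, hA, rfl⟩ := List.mem_map.mp hx
        calc σ = (Finset.univ : Finset α).card := by simp [hσ_def]
        _ ≤ A.toFinset.card := Finset.card_le_card (harch A hA)
        _ ≤ A.length := List.toFinset_card_le A)
      simpa [smul_eq_mul, hm_def] using this
    have hrlen : σ - 1 ≤ (rest w).length := by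
      have h1 : (Finset.univ \ {a} : Finset α).card = σ - 1 := by
        rw [Finset.card_sdiff_of_subset (by simp)]
        simp [hσ_def]
      calc σ - 1 = (alph (rest w)).card := by rw [halph, h1]
      _ ≤ (rest w).length := List.toFinset_card_le _
    rw [hkm, Nat.succ_mul]
    set t := m * σ with ht
    omega
  · -- unique letter
    refine ⟨a, halph, ?_⟩
    intro a' ha'
    have : a' ∉ (rest w).toFinset := by
      rw [show (rest w).toFinset = alph (rest w) from rfl, ha']
      simp
    exact key a' this
end

section
/- Let Σ be a finite alphabet with σ := |Σ| ≥ 2 and let k ≥ 1. If w ∈ Σ* is nearly k-universal, then ScatFact_k(w) = Σ^k ∖ {m(w)·a_w}, i.e., the unique word of length k that is not a scattered factor of w is the modus m(w) of w followed by the letter a_w. -/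
open List in
private lemma myCons_sublist_of_not_mem {α : Type*} {x : α} {t p q : List α}
    (h : x :: t <+ p ++ q) (hx : x ∉ p) : x :: t <+ q := by
  induction p with
  | nil => exact h
  | cons y p' ih =>
    simp only [mem_cons, not_or] at hx
    cases h with
    | cons _ h' => exact ih h' hx.2
    | cons_cons _ h' => exact absurd rfl hx.1

open List in
private lemma mySublist_join_of_len_le {α : Type*} [DecidableEq α] [Fintype α] {L : List (List α)}
    (hL : ∀ A ∈ L, (Finset.univ : Finset α) ⊆ A.toFinset)
    {u : List α} (hu : u.length ≤ L.length) : u <+ L.flatten := by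
  induction L generalizing u with
  | nil =>
    simp only [length_nil, Nat.le_zero, length_eq_zero_iff] at hu
    simp [hu]
  | cons A L' ih =>
    cases u with
    | nil => exact nil_sublist _
    | cons x u' =>
      simp only [flatten_cons]
      have hx : x ∈ A := by
        have := hL A (mem_cons_self) (Finset.mem_univ x)
        simpa using this
      have h1 : [x] <+ A := singleton_sublist.mpr hx
      have h2 : u' <+ L'.flatten := ih (fun B hB => hL B (mem_cons_of_mem _ hB))
        (by simpa using hu)
      exact h1.append h2

open List in
private lemma myModus_not_sublist {α : Type*} {L : List (List α)} {r : List α}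
    (hL : ∀ A ∈ L, ∃ b m, A = b ++ [m] ∧ m ∉ b) {c : α} (hc : c ∉ r) :
    ¬ ((L.filterMap List.getLast?) ++ [c] <+ L.flatten ++ r) := by
  induction L with
  | nil =>
    intro h
    simp only [filterMap_nil, nil_append, flatten_nil] at h
    exact hc (singleton_sublist.mp h)
  | cons A L' ih =>
    intro h
    obtain ⟨b, m, hA, hm⟩ := hL A (mem_cons_self)
    have hlast : A.getLast? = some m := by rw [hA]; exact getLast?_concat
    rw [filterMap_cons, hlast] at h
    simp only [flatten_cons, cons_append] at h
    rw [hA, append_assoc, append_assoc] at h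
    have h2 : m :: (L'.filterMap List.getLast? ++ [c]) <+ [m] ++ (L'.flatten ++ r) :=
      myCons_sublist_of_not_mem h hm
    rw [singleton_append, cons_sublist_cons] at h2
    exact ih (fun B hB => hL B (mem_cons_of_mem _ hB)) h2

open List in
private lemma myArchesAux_spec {α : Type*} [Fintype α] [DecidableEq α]
    (hne : (Finset.univ : Finset α).Nonempty) :
    ∀ (fuel : ℕ) (w : List α), w.length ≤ fuel →
    ((archesAux fuel w).1.flatten ++ (archesAux fuel w).2 = w ∧
     ∀ A ∈ (archesAux fuel w).1,
       (Finset.univ : Finset α) ⊆ A.toFinset ∧ ∃ b m, A = b ++ [m] ∧ m ∉ b) := by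
  intro fuel
  induction fuel with
  | zero =>
    intro w hw
    simp only [archesAux]
    refine ⟨rfl, by simp⟩
  | succ fuel ih =>
    intro w hw
    by_cases hcond : (Finset.univ : Finset α) ⊆ w.toFinset
    · rw [archesAux]
      simp only [hcond, if_true]
      set S : Set ℕ := {n | (Finset.univ : Finset α) ⊆ (w.take n).toFinset} with hS
      have hSne : S.Nonempty := ⟨w.length, by simpa [hS] using hcond⟩
      set n := sInf S with hn
      have hnS : n ∈ S := Nat.sInf_mem hSne
      have hnle : n ≤ w.length := Nat.sInf_le (by simpa [hS] using hcond)
      have hn0 : n ≠ 0 := by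
        intro h0
        rw [h0] at hnS
        simp only [hS, Set.mem_setOf_eq, take_zero, toFinset_nil] at hnS
        obtain ⟨x, hx⟩ := hne
        exact (Finset.notMem_empty x) (hnS (Finset.mem_univ x))
      have hnpos : 1 ≤ n := Nat.one_le_iff_ne_zero.mpr hn0
      have hdroplen : (w.drop n).length ≤ fuel := by
        rw [length_drop]
        omega
      obtain ⟨ihj, ihA⟩ := ih (w.drop n) hdroplen
      constructor
      · simp only [flatten_cons, append_assoc, ihj, take_append_drop]
      · intro A hA
        rcases mem_cons.mp hA with hA | hA
        · subst hA
          constructor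
          · exact hnS
          · have hlt : n - 1 < w.length := by omega
            have hne1 : ¬ (Finset.univ : Finset α) ⊆ (w.take (n-1)).toFinset :=
              Nat.notMem_of_lt_sInf (show n - 1 < sInf S by omega)
            obtain ⟨c, hcu, hcn⟩ := Finset.not_subset.mp hne1
            refine ⟨w.take (n-1), w[n-1], ?_, ?_⟩
            · have : w.take ((n-1) + 1) = w.take (n-1) ++ [w[n-1]] := by
                rw [take_succ]
                simp [getElem?_eq_getElem hlt]
              rw [← this]
              congr 1
              omega
            · -- w[n-1] ∉ take (n-1): show w[n-1] = c
              have hcA : c ∈ (w.take n).toFinset := hnS hcu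
              have htake : w.take n = w.take (n-1) ++ [w[n-1]] := by
                have : w.take ((n-1) + 1) = w.take (n-1) ++ [w[n-1]] := by
                  rw [take_succ]
                  simp [getElem?_eq_getElem hlt]
                rw [← this]
                congr 1
                omega
              rw [htake] at hcA
              simp only [toFinset_append, Finset.mem_union, toFinset_cons, toFinset_nil,
                insert_empty_eq, Finset.mem_singleton] at hcA
              rcases hcA with hcA | hcA
              · exact absurd hcA hcn
              · rw [← hcA]
                exact fun hmem => hcn (List.mem_toFinset.mpr hmem)
        · exact ihA A hA
    · rw [archesAux]
      simp only [hcond, if_false]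
      exact ⟨rfl, by simp⟩

open List in
private lemma myNcard_len {α : Type*} [Fintype α] (k : ℕ) :
    ({u : List α | u.length = k}).ncard = Fintype.card α ^ k := by
  have hr : {u : List α | u.length = k}
      = Set.range (List.Vector.toList : List.Vector α k → List α) := by
    ext u
    constructor
    · intro h; exact ⟨⟨u, h⟩, rfl⟩
    · rintro ⟨v, rfl⟩; exact v.2
  rw [hr, ← Set.image_univ, Set.ncard_image_of_injective _ List.Vector.toList_injective,
    Set.ncard_univ, Nat.card_eq_fintype_card, card_vector]

open List in
private lemma myFinite_len {α : Type*} [Fintype α] (k : ℕ) :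
    ({u : List α | u.length = k}).Finite := by
  have hr : {u : List α | u.length = k}
      = Set.range (List.Vector.toList : List.Vector α k → List α) := by
    ext u
    constructor
    · intro h; exact ⟨⟨u, h⟩, rfl⟩
    · rintro ⟨v, rfl⟩; exact v.2
  rw [hr]; exact Set.finite_range _

open List in
private lemma myFilterMap_len {α : Type*} {L : List (List α)}
    (h : ∀ A ∈ L, ∃ b m, A = b ++ [m] ∧ m ∉ b) :
    (L.filterMap List.getLast?).length = L.length := by
  induction L with
  | nil => rfl
  | cons A L' ih =>
    obtain ⟨b, m, hA, -⟩ := h A (mem_cons_self)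
    have hlast : A.getLast? = some m := by rw [hA]; exact getLast?_concat
    rw [filterMap_cons, hlast, length_cons, ih (fun B hB => h B (mem_cons_of_mem _ hB)),
      length_cons]

/-- For a nearly `k`-universal word `w`, the unique absent scattered factor of
length `k` is `m(w)·a_w`, where `a_w` is the unique letter missing from `r(w)`. -/
theorem stmt_2 {α : Type*} [Fintype α] [DecidableEq α]
    (hσ : 2 ≤ Fintype.card α) {k : ℕ} (hk : 1 ≤ k)
    (w : List α) (hw : NearlyUniv α k w)
    (a : α) (ha : alph (rest w) = Finset.univ \ {a}) :
    ScatFact k w = {u : List α | u.length = k} \ {modus w ++ [a]} := by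
  classical
  have hne : (Finset.univ : Finset α).Nonempty :=
    Finset.univ_nonempty_iff.mpr (Fintype.card_pos_iff.mp (by omega))
  obtain ⟨hjoin0, hprops⟩ := myArchesAux_spec hne w.length w le_rfl
  have hjoin : (archList w).flatten ++ rest w = w := hjoin0
  have props1 : ∀ A ∈ archList w, (Finset.univ : Finset α) ⊆ A.toFinset :=
    fun A h => (hprops A h).1
  have props2 : ∀ A ∈ archList w, ∃ b m, A = b ++ [m] ∧ m ∉ b :=
    fun A h => (hprops A h).2
  have haR : a ∉ rest w := by
    intro h
    have h1 : a ∈ alph (rest w) := List.mem_toFinset.mpr h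
    rw [ha] at h1
    simp at h1
  have hmlen : (modus w).length = iota w := myFilterMap_len props2
  have hnotsub : ¬ List.Sublist (modus w ++ [a]) w := by
    intro h
    exact myModus_not_sublist props2 haR (show List.Sublist _ ((archList w).flatten ++ rest w)
      from by rw [hjoin]; exact h)
  have hw' : (ScatFact k w).ncard = Fintype.card α ^ k - 1 := hw
  have hσk : 2 ≤ Fintype.card α ^ k :=
    le_trans hσ (Nat.le_self_pow (by omega) _)
  set S : Set (List α) := {u : List α | u.length = k} with hSdef
  have hSfin : S.Finite := myFinite_len k
  have hScard : S.ncard = Fintype.card α ^ k := myNcard_len k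
  have hsub : ScatFact k w ⊆ S := fun u hu => hu.1
  have hSFfin : (ScatFact k w).Finite := hSfin.subset hsub
  -- step 1 : iota w < k
  have h1 : iota w < k := by
    by_contra h
    push_neg at h
    have hall : S ⊆ ScatFact k w := by
      intro u hu
      refine ⟨hu, ?_⟩
      rw [← hjoin]
      refine List.Sublist.trans ?_ (List.sublist_append_left _ _)
      exact mySublist_join_of_len_le props1 (by
        have h3 : u.length = k := hu
        have h4 : (archList w).length = iota w := rfl
        omega)
    have hle := Set.ncard_le_ncard hall hSFfin
    rw [hScard, hw'] at hle
    omega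
  -- step 2 : k ≤ iota w + 1
  have h2 : k ≤ iota w + 1 := by
    by_contra h
    push_neg at h
    obtain ⟨b, hba⟩ := Fintype.exists_ne_of_one_lt_card (by omega) a
    set x₀ := modus w ++ [a] with hx₀
    set u1 := x₀ ++ List.replicate (k - iota w - 1) a with hu1
    set u2 := x₀ ++ b :: List.replicate (k - iota w - 2) a with hu2
    have hx₀len : x₀.length = iota w + 1 := by
      simp [hx₀, hmlen]
    have hu1len : u1.length = k := by
      simp only [hu1, List.length_append, List.length_replicate, hx₀len]
      omega
    have hu2len : u2.length = k := by
      simp only [hu2, List.length_append, List.length_cons, List.length_replicate, hx₀len]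
      omega
    have hu12 : u1 ≠ u2 := by
      intro he
      rw [hu1, hu2] at he
      have he2 := List.append_cancel_left he
      have hrep : List.replicate (k - iota w - 1) a
          = a :: List.replicate (k - iota w - 2) a := by
        have : k - iota w - 1 = (k - iota w - 2) + 1 := by omega
        rw [this, List.replicate_succ]
      rw [hrep] at he2
      injection he2 with h _
      exact hba h.symm
    have hnmem : ∀ u t, u = x₀ ++ t → u ∉ ScatFact k w := by
      intro u t hut hu
      apply hnotsub
      refine List.Sublist.trans ?_ hu.2
      rw [hut]
      exact List.sublist_append_left _ _
    have hpairS : {u1, u2} ⊆ S := by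
      intro u hu
      rcases hu with hu | hu
      · rw [hu]; exact hu1len
      · rw [hu]; exact hu2len
    have hsub2 : ScatFact k w ⊆ S \ {u1, u2} := by
      intro u hu
      refine ⟨hsub hu, ?_⟩
      intro he
      rcases he with he | he
      · exact hnmem u _ he hu
      · exact hnmem u _ he hu
    have hd : (S \ {u1, u2}).ncard = Fintype.card α ^ k - 2 := by
      rw [Set.ncard_diff hpairS (hSfin.subset hpairS), Set.ncard_pair hu12, hScard]
    have hle := Set.ncard_le_ncard hsub2 hSfin.diff
    rw [hd, hw'] at hle
    omega
  -- so iota w = k - 1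
  have hiota : iota w = k - 1 := by omega
  have hx0len : (modus w ++ [a]).length = k := by
    simp only [List.length_append, List.length_cons, List.length_nil, hmlen, hiota]
    omega
  have hx0S : (modus w ++ [a]) ∈ S := hx0len
  have hx0not : (modus w ++ [a]) ∉ ScatFact k w := fun h => hnotsub h.2
  have hsub2 : ScatFact k w ⊆ S \ {modus w ++ [a]} := by
    intro u hu
    refine ⟨hsub hu, ?_⟩
    intro he
    exact hx0not (he ▸ hu)
  have hcard2 : (S \ {modus w ++ [a]}).ncard = Fintype.card α ^ k - 1 := by
    rw [Set.ncard_diff_singleton_of_mem hx0S, hScard]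
  exact Set.eq_of_subset_of_ncard_le hsub2 (by rw [hcard2, hw']) hSfin.diff
end

section
/- Let Σ be a finite alphabet with σ := |Σ| ≥ 2 and let k ≥ 2. A word w ∈ Σ* is nearly k-universal if and only if: ι(w) = k − 1, alph(r(w)) = Σ∖{a_w} for a letter a_w ∈ Σ, and for every word v ∈ Σ^k with v[1..k−1] ≠ m(w) and v[k] = a_w there exists i ∈ {1,…,k−2} such that v[i]v[i+1] ∈ ScatFact_2(ar_i(w)), or v[k−1]·a_w ∈ ScatFact_2(ar_{k−1}(w)). -/
namespace StmtAux
open List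

variable {α : Type*} [Fintype α] [DecidableEq α]

/-- An arch: it is a word `B ++ [c]` where `c` does not occur in `B` and the
whole word contains every letter. -/
def GoodArch (A : List α) : Prop :=
  ∃ B c, A = B ++ [c] ∧ c ∉ B.toFinset ∧ A.toFinset = Finset.univ

omit [Fintype α] [DecidableEq α] in
lemma mem_of_getLast?_eq {l : List α} {a : α} (h : l.getLast? = some a) : a ∈ l := by
  obtain ⟨h', rfl⟩ := List.mem_getLast?_eq_getLast (Option.mem_def.mpr h)
  exact List.getLast_mem h'

lemma arch_n (hNe : Nonempty α) {w : List α} (hw : (Finset.univ : Finset α) ⊆ w.toFinset) :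
    1 ≤ sInf {n | (Finset.univ : Finset α) ⊆ (w.take n).toFinset} ∧
    sInf {n | (Finset.univ : Finset α) ⊆ (w.take n).toFinset} ≤ w.length ∧
    (Finset.univ : Finset α) ⊆ (w.take (sInf {n | (Finset.univ : Finset α) ⊆ (w.take n).toFinset})).toFinset := by
  have hmem : w.length ∈ {n | (Finset.univ : Finset α) ⊆ (w.take n).toFinset} := by
    simpa using hw
  have hne : {n | (Finset.univ : Finset α) ⊆ (w.take n).toFinset}.Nonempty := ⟨_, hmem⟩
  refine ⟨?_, Nat.sInf_le hmem, Nat.sInf_mem hne⟩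
  rcases Nat.eq_zero_or_pos (sInf _) with h0 | h1
  · exfalso
    have := Nat.sInf_mem hne
    rw [h0] at this
    simp only [Set.mem_setOf_eq, List.take_zero, List.toFinset_nil] at this
    obtain ⟨x⟩ := hNe
    exact absurd (this (Finset.mem_univ x)) (by simp)
  · exact h1

lemma archesAux_join (fuel : ℕ) (w : List α) :
    (archesAux fuel w).1.flatten ++ (archesAux fuel w).2 = w := by
  induction fuel generalizing w with
  | zero => simp [archesAux]
  | succ fuel ih =>
    rw [archesAux]
    split
    · simp only [List.flatten_cons, List.append_assoc, ih]
      exact List.take_append_drop _ w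
    · simp

lemma archesAux_good (hNe : Nonempty α) (fuel : ℕ) (w : List α) :
    ∀ A ∈ (archesAux fuel w).1, GoodArch A := by
  induction fuel generalizing w with
  | zero => simp [archesAux]
  | succ fuel ih =>
    rw [archesAux]
    split
    · rename_i hw
      intro A hA
      simp only [List.mem_cons] at hA
      rcases hA with rfl | hA
      · obtain ⟨h1, h2, h3⟩ := arch_n hNe hw
        set n := sInf {n | (Finset.univ : Finset α) ⊆ (w.take n).toFinset} with hn
        have hlt : n - 1 < w.length := by omega
        have htake : w.take n = w.take (n-1) ++ [w[n-1]] := by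
          conv_lhs => rw [show n = (n-1) + 1 by omega]
          rw [List.take_succ, List.getElem?_eq_getElem hlt]
          simp
        refine ⟨w.take (n-1), w[n-1], htake, ?_, ?_⟩
        · intro hmem
          have hnot : n - 1 ∉ {n | (Finset.univ : Finset α) ⊆ (w.take n).toFinset} :=
            Nat.notMem_of_lt_sInf (by omega)
          apply hnot
          intro x _
          have hx : x ∈ (w.take n).toFinset := h3 (Finset.mem_univ x)
          rw [htake] at hx
          simp only [List.toFinset_append, Finset.mem_union, List.toFinset_cons,
            List.toFinset_nil, insert_empty_eq, Finset.mem_insert, Finset.mem_singleton] at hx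
          rcases hx with hx | rfl
          · exact hx
          · exact hmem
        · exact subset_antisymm (Finset.subset_univ _) h3
      · exact ih _ A hA
    · simp

lemma archesAux_rest (hNe : Nonempty α) (fuel : ℕ) (w : List α) (hfuel : w.length ≤ fuel) :
    ¬ (Finset.univ : Finset α) ⊆ (archesAux fuel w).2.toFinset := by
  induction fuel generalizing w with
  | zero =>
    have : w = [] := List.length_eq_zero_iff.mp (by omega)
    subst this
    simp only [archesAux]
    intro h
    obtain ⟨x⟩ := hNe
    exact absurd (h (Finset.mem_univ x)) (by simp)
  | succ fuel ih =>
    rw [archesAux]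
    split
    · rename_i hw
      obtain ⟨h1, h2, h3⟩ := arch_n hNe hw
      apply ih
      simp only [List.length_drop]
      omega
    · assumption

lemma sing_sub : ∀ (u : List α) (L : List (List α)),
    (∀ A ∈ L, A.toFinset = Finset.univ) → u.length ≤ L.length → u <+ L.flatten
  | [], _, _, _ => List.nil_sublist _
  | x :: u, [], _, h => by simp at h
  | x :: u, A :: L, hL, h => by
    rw [List.flatten_cons]
    have hx : [x] <+ A := List.singleton_sublist.mpr (by
      rw [← List.mem_toFinset, hL A (by simp)]; exact Finset.mem_univ x)
    have := List.Sublist.append hx (sing_sub u L (fun B hB => hL B (by simp [hB]))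
      (by simpa using Nat.succ_le_succ_iff.mp h))
    simpa using this

lemma split1 {v A t : List α} (hv : v ≠ []) (h : v <+ A ++ t)
    (hA : A.toFinset = Finset.univ) :
    ∃ v1 v2, v = v1 ++ v2 ∧ v1 ≠ [] ∧ v1 <+ A ∧ v2 <+ t := by
  rw [List.sublist_append_iff] at h
  obtain ⟨v1, v2, rfl, h1, h2⟩ := h
  rcases v1 with _ | ⟨x, u⟩
  · rcases v2 with _ | ⟨x, u⟩
    · simp at hv
    · refine ⟨[x], u, by simp, by simp, ?_, (List.sublist_cons_self x u).trans h2⟩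
      exact List.singleton_sublist.mpr (by rw [← List.mem_toFinset, hA]; exact Finset.mem_univ x)
  · exact ⟨x :: u, v2, rfl, by simp, h1, h2⟩

variable [Inhabited α]

lemma key_lemma : ∀ (L : List (List α)) (v r : List α) (a : α),
    (∀ A ∈ L, A.toFinset = Finset.univ) → v <+ L.flatten ++ r →
    L.length + 1 ≤ v.length → v.getLast? = some a → a ∉ r.toFinset →
    ∃ i < L.length, [v.getD i default, v.getD (i+1) default] <+ L.getD i []
  | [], v, r, a, _, hsub, hlen, hlast, har => by
    exact absurd (List.mem_toFinset.mpr (hsub.subset (mem_of_getLast?_eq hlast))) har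
  | A :: L, v, r, a, hL, hsub, hlen, hlast, har => by
    have hv : v ≠ [] := by rintro rfl; simp at hlen
    rw [List.flatten_cons, List.append_assoc] at hsub
    obtain ⟨v1, v2, hveq, hv1ne, hv1, hv2⟩ := split1 hv hsub (hL A (by simp))
    rcases v1 with _ | ⟨x, u⟩
    · simp at hv1ne
    rcases u with _ | ⟨y, u⟩
    · -- v1 = [x]
      have hlen2 : L.length + 1 ≤ v2.length := by
        have h1 := congrArg List.length hveq
        simp only [List.length_cons, List.length_append, List.length_nil] at h1 hlen
        omega
      have hv2ne : v2 ≠ [] := by rintro rfl; simp at hlen2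
      have hlast2 : v2.getLast? = some a := by
        rw [hveq, List.getLast?_append_of_ne_nil _ hv2ne] at hlast; exact hlast
      obtain ⟨j, hj, hpair⟩ := key_lemma L v2 r a (fun B hB => hL B (by simp [hB]))
        hv2 hlen2 hlast2 har
      refine ⟨j + 1, by simpa using Nat.succ_lt_succ hj, ?_⟩
      have : v = x :: v2 := by simpa using hveq
      rw [this]
      simpa using hpair
    · -- v1 = x :: y :: u
      refine ⟨0, by simp, ?_⟩
      have hxy : [x, y] <+ A := by
        refine List.Sublist.trans ?_ hv1
        exact (List.cons_sublist_cons).mpr ((List.cons_sublist_cons).mpr (List.nil_sublist u))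
      have : v = x :: y :: (u ++ v2) := by simpa using hveq
      rw [this]
      simpa using hxy

lemma suff_lemma (L : List (List α)) (v : List α) (i : ℕ)
    (hL : ∀ A ∈ L, A.toFinset = Finset.univ) (hi : i < L.length)
    (hlen : v.length ≤ L.length + 1) (hiv : i + 1 < v.length)
    (hpair : [v.getD i default, v.getD (i+1) default] <+ L.getD i []) :
    v <+ L.flatten := by
  have hvdec : v = v.take i ++ v.getD i default :: v.getD (i+1) default :: v.drop (i+2) := by
    rw [List.getD_eq_getElem v default (by omega), List.getD_eq_getElem v default hiv]
    conv_lhs => rw [← List.take_append_drop i v]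
    congr 1
    rw [List.drop_eq_getElem_cons (by omega)]
    congr 1
    rw [List.drop_eq_getElem_cons hiv]
  have hLdec : L.flatten = (L.take i).flatten ++ (L.getD i [] ++ (L.drop (i+1)).flatten) := by
    conv_lhs => rw [← List.take_append_drop i L]
    rw [List.flatten_append]
    congr 1
    rw [List.drop_eq_getElem_cons hi, List.flatten_cons, List.getD_eq_getElem L [] hi]
  rw [hvdec, hLdec]
  refine List.Sublist.append ?_ ?_
  · exact sing_sub _ _ (fun A hA => hL A (List.mem_of_mem_take hA)) (by
      simp [List.length_take]; omega)
  · show (v.getD i default :: v.getD (i+1) default :: v.drop (i+2)) <+ _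
    have h2 : v.drop (i+2) <+ (L.drop (i+1)).flatten := by
      refine sing_sub _ _ (fun A hA => hL A (List.mem_of_mem_drop hA)) ?_
      simp [List.length_drop]; omega
    have := List.Sublist.append hpair h2
    simpa using this

omit [Inhabited α] in
lemma lastone {B u : List α} {c : α} (h : c :: u <+ B ++ [c]) (hc : c ∉ B.toFinset) :
    u = [] := by
  rw [List.sublist_append_iff] at h
  obtain ⟨x1, x2, heq, h1, h2⟩ := h
  rcases x1 with _ | ⟨z, u1⟩
  · simp only [List.nil_append] at heq
    have h2' := h2.length_le
    rw [← heq] at h2'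
    simp only [List.length_cons, List.length_nil] at h2'
    exact List.length_eq_zero_iff.mp (by omega)
  · have hz : z = c := by have h' := congrArg (·.head?) heq; simp at h'; exact h'.symm
    subst hz
    exact absurd (List.mem_toFinset.mpr (h1.subset (by simp))) hc

omit [Inhabited α] in
lemma mod_sub : ∀ (L : List (List α)), (∀ A ∈ L, GoodArch A) →
    L.filterMap List.getLast? <+ L.flatten
  | [], _ => by simp
  | A :: L, hL => by
    obtain ⟨B, c, rfl, hc, hA⟩ := hL A (by simp)
    rw [List.flatten_cons, List.filterMap_cons]
    rw [List.getLast?_concat]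
    have hc1 : [c] <+ B ++ [c] := List.sublist_append_right _ _
    have := List.Sublist.append hc1 (mod_sub L (fun X hX => hL X (by simp [hX])))
    simpa using this

omit [Inhabited α] in
lemma mod_lemma : ∀ (L : List (List α)) (r : List α) (x : α), (∀ A ∈ L, GoodArch A) →
    (L.filterMap List.getLast?) ++ [x] <+ L.flatten ++ r → x ∈ r.toFinset
  | [], r, x, _, h => by
    simp only [List.filterMap_nil, List.nil_append, List.flatten_nil] at h
    exact List.mem_toFinset.mpr (h.subset (by simp))
  | A :: L, r, x, hL, h => by
    obtain ⟨B, c, rfl, hc, hA⟩ := hL A (by simp)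
    rw [List.filterMap_cons, List.getLast?_concat, List.flatten_cons, List.append_assoc] at h
    simp only [List.cons_append] at h
    rw [List.sublist_append_iff] at h
    obtain ⟨v1, v2, heq, h1, h2⟩ := h
    have IH := mod_lemma L r x (fun X hX => hL X (by simp [hX]))
    rcases v1 with _ | ⟨z, u⟩
    · simp only [List.nil_append] at heq
      rw [← heq] at h2
      exact IH ((List.sublist_cons_self _ _).trans h2)
    · have hz : z = c := by have h' := congrArg (·.head?) heq; simp at h'; exact h'.symm
      subst hz
      have hu : u = [] := lastone h1 hc
      subst hu
      have : v2 = L.filterMap List.getLast? ++ [x] := by simpa using heq.symm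
      exact IH (this ▸ h2)

omit [Inhabited α] in
lemma mod_length : ∀ (L : List (List α)), (∀ A ∈ L, GoodArch A) →
    (L.filterMap List.getLast?).length = L.length
  | [], _ => by simp
  | A :: L, hL => by
    obtain ⟨B, c, rfl, hc, hA⟩ := hL A (by simp)
    rw [List.filterMap_cons, List.getLast?_concat]
    simpa using mod_length L (fun X hX => hL X (by simp [hX]))

omit [Inhabited α] in
lemma Sk_ncard (k : ℕ) :
    ({l : List α | l.length = k} : Set (List α)).ncard = Fintype.card α ^ k := by
  rw [← Nat.card_coe_set_eq]
  have e : ({l : List α | l.length = k} : Set (List α)) ≃ List.Vector α k :=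
    Equiv.refl _
  rw [Nat.card_congr e, Nat.card_eq_fintype_card, card_vector]

end StmtAux

/-- Characterisation of nearly `k`-universal words: `ι(w) = k-1`,
`alph(r(w)) = Σ \ {a_w}`, and every `v ∈ Σ^k` with `v[1..k-1] ≠ m(w)` and
`v[k] = a_w` satisfies: some `v[i]v[i+1]` is a scattered factor of `ar_i(w)`
for an `i ∈ [k-2]`, or `v[k-1]·a_w` is a scattered factor of `ar_{k-1}(w)`. -/
theorem stmt_3 {α : Type*} [Fintype α] [DecidableEq α] [Inhabited α]
    (hσ : 2 ≤ Fintype.card α) {k : ℕ} (hk : 2 ≤ k) (w : List α) :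
    NearlyUniv α k w ↔
      iota w = k - 1 ∧
      ∃ a : α, alph (rest w) = Finset.univ \ {a} ∧
        ∀ v : List α, v.length = k → v.take (k-1) ≠ modus w →
          v.getLast? = some a →
          (∃ i ∈ Finset.Icc 1 (k-2),
              [v.getD (i-1) default, v.getD i default].Sublist (arch w i)) ∨
            [v.getD (k-2) default, a].Sublist (arch w (k-1)) := by
  have hNe : Nonempty α := Fintype.card_pos_iff.mp (by omega)
  set L := archList w with hL
  set r := rest w with hr
  have hjoin : L.flatten ++ r = w := StmtAux.archesAux_join w.length w
  have hgood : ∀ A ∈ L, StmtAux.GoodArch A := StmtAux.archesAux_good hNe w.length w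
  have huniv : ∀ A ∈ L, A.toFinset = Finset.univ := by
    intro A hA
    obtain ⟨B, c, _, _, h⟩ := hgood A hA
    exact h
  have hrest : ¬ (Finset.univ : Finset α) ⊆ r.toFinset := StmtAux.archesAux_rest hNe w.length w le_rfl
  have hmlen : (modus w).length = L.length := StmtAux.mod_length L hgood
  set Sk : Set (List α) := {l : List α | l.length = k} with hSk
  have hSkfin : Sk.Finite := List.finite_length_eq α k
  have hSkcard : Sk.ncard = Fintype.card α ^ k := StmtAux.Sk_ncard k
  have hσk : 4 ≤ Fintype.card α ^ k := by
    calc (4:ℕ) = 2 ^ 2 := rfl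
    _ ≤ 2 ^ k := Nat.pow_le_pow_right (by omega) hk
    _ ≤ Fintype.card α ^ k := Nat.pow_le_pow_left hσ k
  have hmw : modus w = L.filterMap List.getLast? := rfl
  have hMISS : ∀ x : α, x ∉ r.toFinset → ¬ List.Sublist (modus w ++ [x]) w := by
    intro x hx hsub
    exact hx (StmtAux.mod_lemma L r x hgood (by rw [hjoin, ← hmw]; exact hsub))
  -- last letter extraction
  have hlastD : ∀ v : List α, ∀ a : α, v.length = k → v.getLast? = some a →
      v.getD (k-1) default = a := by
    intro v a hvl hvlast
    rw [List.getD_eq_getElem?_getD, show k - 1 = v.length - 1 by omega,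
      ← List.getLast?_eq_getElem?, hvlast]
    rfl
  constructor
  · intro hN
    have hN' : (ScatFact k w).ncard = Fintype.card α ^ k - 1 := hN
    have TWO : ∀ u1 u2 : List α, u1.length = k → u2.length = k →
        ¬ List.Sublist u1 w → ¬ List.Sublist u2 w → u1 = u2 := by
      intro u1 u2 h1 h2 hs1 hs2
      by_contra hne
      have hsub : ScatFact k w ⊆ Sk \ {u1, u2} := by
        rintro u ⟨hl, hs⟩
        refine ⟨hl, ?_⟩
        rintro (rfl | rfl)
        · exact hs1 hs
        · exact hs2 hs
      have hpairfin : ({u1, u2} : Set (List α)).Finite :=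
        (Set.finite_singleton u2).insert u1
      have hle := Set.ncard_le_ncard hsub hSkfin.diff
      have hdiff : (Sk \ {u1, u2}).ncard = Fintype.card α ^ k - 2 := by
        rw [Set.ncard_diff (by rintro x (rfl | rfl); exacts [h1, h2]) hpairfin,
          Set.ncard_pair hne, hSkcard]
      rw [hN', hdiff] at hle
      omega
    have hiota : L.length = k - 1 := by
      rcases lt_trichotomy L.length (k-1) with hlt | heq | hgt
      · -- too few arches : two missing words
        exfalso
        obtain ⟨x, _, hx⟩ := Finset.not_subset.mp hrest
        obtain ⟨b1, b2, hb⟩ := Fintype.exists_pair_of_one_lt_card (α := α) (by omega)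
        have hmk : L.length + 2 ≤ k := by omega
        have hpre : ∀ b : α, ¬ List.Sublist (modus w ++ x :: List.replicate (k - L.length - 2 + 1) b) w := by
          intro b hsub
          apply hMISS x hx
          refine List.Sublist.trans ?_ hsub
          apply List.Sublist.append_left
          simp
        have hlen : ∀ b : α, (modus w ++ x :: List.replicate (k - L.length - 2 + 1) b).length = k := by
          intro b
          simp only [List.length_append, List.length_cons, List.length_replicate, hmw,
            StmtAux.mod_length L hgood]
          omega
        have heq2 := TWO _ _ (hlen b1) (hlen b2) (hpre b1) (hpre b2)
        have h3 := List.append_cancel_left heq2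
        apply hb
        have h4 := congrArg (·.tail.head?) h3
        simpa [List.replicate_succ] using h4
      · exact heq
      · -- too many arches : everything is a scattered factor
        exfalso
        have hall : ScatFact k w = Sk := by
          apply Set.eq_of_subset_of_subset (fun u hu => hu.1)
          intro u hu
          refine ⟨hu, ?_⟩
          rw [← hjoin]
          have hu' : u.length = k := hu
          exact ((StmtAux.sing_sub u L huniv (by omega)).trans (List.sublist_append_left _ _))
        rw [hall, hSkcard] at hN'
        omega
    -- rest misses exactly one letter
    obtain ⟨a, _, ha⟩ := Finset.not_subset.mp hrest
    have hbmiss : ∀ y : α, y ∉ r.toFinset → y = a := by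
      intro y hy
      have h1 : (modus w ++ [y]).length = k := by simp [hmlen]; omega
      have h2 : (modus w ++ [a]).length = k := by simp [hmlen]; omega
      have := TWO _ _ h1 h2 (hMISS y hy) (hMISS a ha)
      simpa using List.append_cancel_left this
    have halph : alph r = Finset.univ \ {a} := by
      ext y
      simp only [alph, Finset.mem_sdiff, Finset.mem_univ, true_and, Finset.mem_singleton]
      constructor
      · intro hy hya
        exact ha (hya ▸ hy)
      · intro hya
        by_contra hy
        exact hya (hbmiss y hy)
    refine ⟨hiota, a, halph, ?_⟩
    intro v hvlen hvtake hvlast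
    have hvw : List.Sublist v w := by
      by_contra hvw
      have h2 : (modus w ++ [a]).length = k := by simp [hmlen]; omega
      have := TWO v _ hvlen h2 hvw (hMISS a ha)
      apply hvtake
      rw [this, List.take_left' (by omega)]
    rw [← hjoin] at hvw
    obtain ⟨i, hi, hpair⟩ := StmtAux.key_lemma L v r a huniv hvw (by omega) hvlast ha
    rcases Nat.lt_or_ge i (k - 2) with hik | hik
    · left
      refine ⟨i + 1, Finset.mem_Icc.mpr ⟨by omega, by omega⟩, ?_⟩
      simpa [arch, hL] using hpair
    · right
      have hieq : i = k - 2 := by omega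
      subst hieq
      have hkk : k - 2 + 1 = k - 1 := by omega
      rw [hkk] at hpair
      rw [hlastD v a hvlen hvlast] at hpair
      simpa [arch, hL, show k - 1 - 1 = k - 2 by omega] using hpair
  · rintro ⟨hiota, a, halph, hcond⟩
    have hiota' : L.length = k - 1 := hiota
    have ha : a ∉ r.toFinset := by
      intro hmem
      have : a ∈ alph r := hmem
      rw [halph] at this
      simp at this
    have hmem_r : ∀ b : α, b ≠ a → b ∈ r.toFinset := by
      intro b hb
      have : b ∈ alph r := by
        rw [halph]; simp [hb]
      exact this
    have hkey : ScatFact k w = Sk \ {modus w ++ [a]} := by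
      ext u
      simp only [ScatFact, Set.mem_setOf_eq, Set.mem_diff, Set.mem_singleton_iff, hSk]
      constructor
      · rintro ⟨hl, hs⟩
        refine ⟨hl, ?_⟩
        rintro rfl
        exact hMISS a ha hs
      · rintro ⟨hl, hne⟩
        refine ⟨hl, ?_⟩
        have hune : u ≠ [] := by rintro rfl; simp at hl; omega
        have hudec : u = u.dropLast ++ [u.getLast hune] := (List.dropLast_append_getLast hune).symm
        rcases eq_or_ne (u.getLast hune) a with hba | hba
        · -- last letter is a
          have hulast : u.getLast? = some a := by
            rw [List.getLast?_eq_getLast hune, hba]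
          have htk : u.take (k-1) = u.dropLast := by
            rw [List.dropLast_eq_take, hl]
          have htkne : u.take (k-1) ≠ modus w := by
            intro hEq
            apply hne
            conv_lhs => rw [hudec, hba, ← htk, hEq]
          obtain hdis := hcond u hl htkne hulast
          have hpair : ∃ i < L.length,
              List.Sublist [u.getD i default, u.getD (i+1) default] (L.getD i []) := by
            rcases hdis with ⟨i, hiI, hp⟩ | hp
            · rw [Finset.mem_Icc] at hiI
              refine ⟨i - 1, by omega, ?_⟩
              have h1 : i - 1 + 1 = i := by omega
              rw [h1]
              simpa [arch, hL] using hp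
            · refine ⟨k - 2, by omega, ?_⟩
              have h1 : k - 2 + 1 = k - 1 := by omega
              rw [h1, hlastD u a hl hulast]
              have h2 : k - 1 - 1 = k - 2 := by omega
              simpa [arch, hL, h2] using hp
          obtain ⟨i, hi, hp⟩ := hpair
          rw [← hjoin]
          refine ((StmtAux.suff_lemma L u i huniv hi (by omega) (by omega) hp).trans
            (List.sublist_append_left _ _))
        · -- last letter is not a
          rw [← hjoin]
          conv_lhs => rw [hudec]
          refine List.Sublist.append ?_ ?_
          · refine StmtAux.sing_sub _ _ huniv ?_
            have : u.dropLast.length = k - 1 := by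
              rw [List.length_dropLast, hl]
            omega
          · exact List.singleton_sublist.mpr (List.mem_toFinset.mp (hmem_r _ hba))
    show (ScatFact k w).ncard = Fintype.card α ^ k - 1
    rw [hkey]
    have hmem : modus w ++ [a] ∈ Sk := by
      simp only [hSk, Set.mem_setOf_eq, List.length_append, List.length_cons, List.length_nil]
      rw [hmlen]
      simp; omega
    rw [Set.ncard_diff_singleton_of_mem hmem, hSkcard]
end

section
/- Let Σ be a finite alphabet with σ := |Σ| ≥ 2, let k ≥ 1 and let ℓ ≤ k − 1. If w ∈ Σ* is nearly k-universal with arch factorization w = ar_1(w)⋯ar_{k−1}(w)·r(w), then the word ar_{ℓ+1}(w)⋯ar_{k−1}(w)·r(w), obtained by cutting off the first ℓ arches of w, is nearly (k−ℓ)-universal. -/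
/-! ### Auxiliary material for the proof -/

set_option linter.unusedSectionVars false

section MyAux

variable {α : Type*} [Fintype α] [DecidableEq α]

/-- The length of the first arch of `w`. -/
noncomputable def myArchLen (w : List α) : ℕ :=
  sInf {n | (Finset.univ : Finset α) ⊆ (w.take n).toFinset}

variable [Nonempty α]

lemma myArchLen_mem {w : List α} (h : (Finset.univ : Finset α) ⊆ w.toFinset) :
    (Finset.univ : Finset α) ⊆ (w.take (myArchLen w)).toFinset := by
  apply Nat.sInf_mem (s := {n | (Finset.univ : Finset α) ⊆ (w.take n).toFinset})
  exact ⟨w.length, by simpa using h⟩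

lemma myArchLen_pos {w : List α} (h : (Finset.univ : Finset α) ⊆ w.toFinset) :
    1 ≤ myArchLen w := by
  by_contra hn
  push_neg at hn
  interval_cases hh : myArchLen w
  · have := myArchLen_mem h
    rw [hh] at this
    simp at this
    obtain ⟨a⟩ := ‹Nonempty α›
    exact absurd (this ▸ Finset.mem_univ a) (by simp [this])

lemma myArchLen_le {w : List α} (h : (Finset.univ : Finset α) ⊆ w.toFinset) :
    myArchLen w ≤ w.length :=
  Nat.sInf_le (by simpa using h)

lemma my_archesAux_congr : ∀ f₁ : ℕ, ∀ f₂ : ℕ, ∀ w : List α, w.length ≤ f₁ → w.length ≤ f₂ →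
    archesAux f₁ w = archesAux f₂ w := by
  intro f₁
  induction f₁ using Nat.strong_induction_on with
  | _ f₁ ih =>
    intro f₂ w h1 h2
    match f₁, f₂ with
    | 0, 0 => rfl
    | 0, f₂+1 =>
      have : w = [] := List.length_eq_zero_iff.mp (Nat.le_zero.mp h1)
      subst this
      conv_rhs => rw [archesAux]
      rw [if_neg (by simp [Finset.univ_nonempty.ne_empty])]
      rfl
    | f₁+1, 0 =>
      have : w = [] := List.length_eq_zero_iff.mp (Nat.le_zero.mp h2)
      subst this
      conv_lhs => rw [archesAux]
      rw [if_neg (by simp [Finset.univ_nonempty.ne_empty])]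
      rfl
    | f₁+1, f₂+1 =>
      by_cases h : (Finset.univ : Finset α) ⊆ w.toFinset
      · rw [archesAux, if_pos h, archesAux, if_pos h]
        have hpos := myArchLen_pos h
        have hd : (w.drop (myArchLen w)).length ≤ f₁ ∧ (w.drop (myArchLen w)).length ≤ f₂ := by
          constructor <;> · rw [List.length_drop]; omega
        have := ih f₁ (Nat.lt_succ_self _) f₂ (w.drop (myArchLen w)) hd.1 hd.2
        show ((w.take (myArchLen w)) :: (archesAux f₁ (w.drop (myArchLen w))).1,
              (archesAux f₁ (w.drop (myArchLen w))).2) = _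
        rw [this]
        rfl
      · rw [archesAux, if_neg h, archesAux, if_neg h]

lemma my_archList_pos {w : List α} (h : (Finset.univ : Finset α) ⊆ w.toFinset) :
    archList w = w.take (myArchLen w) :: archList (w.drop (myArchLen w)) ∧
      rest w = rest (w.drop (myArchLen w)) := by
  have hwne : w ≠ [] := by
    intro he
    subst he
    simp at h
    obtain ⟨a⟩ := ‹Nonempty α›
    exact absurd (h ▸ Finset.mem_univ a) (by simp [h])
  have hlen : 1 ≤ w.length := by
    cases w with
    | nil => exact absurd rfl hwne
    | cons a l => simp
  have hpos := myArchLen_pos h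
  have hle := myArchLen_le h
  obtain ⟨m, hm⟩ : ∃ m, w.length = m + 1 := ⟨w.length - 1, by omega⟩
  have key : archesAux w.length w =
      ((w.take (myArchLen w)) :: archList (w.drop (myArchLen w)),
        rest (w.drop (myArchLen w))) := by
    rw [hm, archesAux, if_pos h]
    have hcongr : archesAux m (w.drop (myArchLen w)) =
        archesAux (w.drop (myArchLen w)).length (w.drop (myArchLen w)) := by
      apply my_archesAux_congr
      · rw [List.length_drop]; omega
      · exact le_rfl
    show ((w.take (myArchLen w)) :: (archesAux m (w.drop (myArchLen w))).1,
          (archesAux m (w.drop (myArchLen w))).2) = _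
    rw [hcongr]
    rfl
  constructor
  · show (archesAux w.length w).1 = _
    rw [key]
  · show (archesAux w.length w).2 = _
    rw [key]

lemma my_archList_neg {w : List α} (h : ¬ (Finset.univ : Finset α) ⊆ w.toFinset) :
    archList w = [] ∧ rest w = w := by
  rcases Nat.eq_zero_or_pos w.length with h0 | h1
  · have : w = [] := List.length_eq_zero_iff.mp h0
    subst this
    exact ⟨rfl, rfl⟩
  · obtain ⟨m, hm⟩ : ∃ m, w.length = m + 1 := ⟨w.length - 1, by omega⟩
    have key : archesAux w.length w = ([], w) := by
      rw [hm, archesAux, if_neg h]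
    constructor
    · show (archesAux w.length w).1 = _
      rw [key]
    · show (archesAux w.length w).2 = _
      rw [key]

lemma my_flatten_arch : ∀ (N : ℕ) (w : List α), w.length ≤ N →
    (archList w).flatten ++ rest w = w := by
  intro N
  induction N with
  | zero =>
    intro w h
    have : w = [] := List.length_eq_zero_iff.mp (Nat.le_zero.mp h)
    subst this
    have h2 := my_archList_neg (w := ([] : List α))
      (by simp [Finset.univ_nonempty.ne_empty])
    rw [h2.1, h2.2]
    rfl
  | succ N ih =>
    intro w h
    by_cases hc : (Finset.univ : Finset α) ⊆ w.toFinset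
    · obtain ⟨h1, h2⟩ := my_archList_pos hc
      rw [h1, h2, List.flatten_cons, List.append_assoc]
      rw [ih (w.drop (myArchLen w)) (by rw [List.length_drop]; have := myArchLen_pos hc; omega)]
      exact List.take_append_drop _ _
    · obtain ⟨h1, h2⟩ := my_archList_neg hc
      rw [h1, h2]
      rfl

lemma my_exists_c {w : List α} (h : (Finset.univ : Finset α) ⊆ w.toFinset) :
    ∃ c, c ∈ w.take (myArchLen w) ∧ c ∉ w.take (myArchLen w - 1) := by
  have hn1 := myArchLen_pos h
  have hnle := myArchLen_le h
  set n := myArchLen w with hn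
  have hA : (w.take n).length = n := by rw [List.length_take]; omega
  have hAne : w.take n ≠ [] := by
    intro he
    rw [he] at hA
    simp at hA
    omega
  refine ⟨(w.take n).getLast hAne, List.getLast_mem hAne, ?_⟩
  intro hmem
  have hdl : (w.take n).dropLast = w.take (n - 1) := by
    rw [List.dropLast_eq_take, hA, List.take_take, min_eq_left (by omega)]
  have hsplit : w.take n = (w.take n).dropLast ++ [(w.take n).getLast hAne] :=
    (List.dropLast_append_getLast hAne).symm
  have hsubs : (w.take n).toFinset ⊆ (w.take (n - 1)).toFinset := by
    intro x hx
    rw [List.mem_toFinset] at hx ⊢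
    rw [hsplit] at hx
    rcases List.mem_append.mp hx with hx | hx
    · rw [hdl] at hx
      exact hx
    · rw [List.mem_singleton] at hx
      subst hx
      exact hmem
  have huniv' : (Finset.univ : Finset α) ⊆ (w.take (n - 1)).toFinset :=
    (myArchLen_mem h).trans hsubs
  have : myArchLen w ≤ n - 1 := Nat.sInf_le huniv'
  omega

lemma my_anyletter {w u : List α} {n : ℕ} {a : α} (ha : a ∈ w.take n)
    (hu : u.Sublist (w.drop n)) : (a :: u).Sublist w :=
  List.cons_sublist_iff.mpr ⟨w.take n, w.drop n, (List.take_append_drop n w).symm, ha, hu⟩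

lemma my_key_iff {w : List α} {n : ℕ} {c : α} (hc1 : c ∈ w.take n)
    (hc2 : c ∉ w.take (n - 1)) (u : List α) :
    (c :: u).Sublist w ↔ u.Sublist (w.drop n) := by
  constructor
  · intro h
    obtain ⟨r₁, r₂, hw, hcr, hu⟩ := List.cons_sublist_iff.mp h
    by_cases hlen : n ≤ r₁.length
    · have hr₂ : r₂ = w.drop r₁.length := by rw [hw, List.drop_left]
      have hdd : w.drop r₁.length = (w.drop n).drop (r₁.length - n) := by
        rw [List.drop_drop]
        congr 1
        omega
      refine hu.trans ?_
      rw [hr₂, hdd]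
      exact List.drop_sublist _ _
    · exfalso
      apply hc2
      have hr₁ : r₁ = w.take r₁.length := by rw [hw, List.take_left]
      have hcw : c ∈ w.take r₁.length := hr₁ ▸ hcr
      have htt : w.take r₁.length = (w.take (n - 1)).take r₁.length := by
        rw [List.take_take, min_eq_left (by omega)]
      rw [htt] at hcw
      exact List.take_subset _ _ hcw
  · intro hu
    exact my_anyletter hc1 hu

lemma my_missing_card (k : ℕ) (w : List α) :
    {u : List α | u.length = k ∧ ¬ u.Sublist w}.ncard + (ScatFact k w).ncard =
      Fintype.card α ^ k := by
  classical
  set T : Set (List α) := {u : List α | u.length = k} with hT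
  have e : T ≃ List.Vector α k :=
    ⟨fun x => ⟨x.1, x.2⟩, fun v => ⟨v.1, v.2⟩, fun _ => rfl, fun _ => rfl⟩
  have hTcard : T.ncard = Fintype.card α ^ k := by
    rw [← Nat.card_coe_set_eq, Nat.card_congr e, Nat.card_eq_fintype_card, card_vector]
  have hTfin : T.Finite := by
    have : Finite T := Finite.of_equiv _ e.symm
    exact Set.finite_coe_iff.mp this
  have hsub : ScatFact k w ⊆ T := fun u hu => hu.1
  have hM : {u : List α | u.length = k ∧ ¬ u.Sublist w} = T \ ScatFact k w := by
    ext u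
    simp only [Set.mem_setOf_eq, Set.mem_diff, ScatFact, hT]
    tauto
  rw [hM, Set.ncard_diff_add_ncard_of_subset hsub hTfin, hTcard]

lemma my_nearly_iff (k : ℕ) (w : List α) :
    NearlyUniv α k w ↔ {u : List α | u.length = k ∧ ¬ u.Sublist w}.ncard = 1 := by
  have h := my_missing_card k w
  have h1 : 1 ≤ Fintype.card α ^ k := Nat.one_le_pow _ _ Fintype.card_pos
  unfold NearlyUniv
  omega

lemma my_step (hσ : 2 ≤ Fintype.card α) {k : ℕ} (hk : 2 ≤ k) (w : List α)
    (hw : NearlyUniv α k w) :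
    (Finset.univ : Finset α) ⊆ w.toFinset ∧
      NearlyUniv α (k - 1) (w.drop (myArchLen w)) := by
  obtain ⟨m, hm⟩ := Set.ncard_eq_one.mp ((my_nearly_iff k w).mp hw)
  have hmm : m.length = k ∧ ¬ m.Sublist w := by
    have : m ∈ ({m} : Set (List α)) := rfl
    rw [← hm] at this
    exact this
  have huniv : (Finset.univ : Finset α) ⊆ w.toFinset := by
    intro a _
    rw [List.mem_toFinset]
    by_contra ha
    obtain ⟨b, hb⟩ := Fintype.exists_ne_of_one_lt_card (by omega) a
    have h1 : (List.replicate k a : List α) ∈ {u : List α | u.length = k ∧ ¬ u.Sublist w} := by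
      refine ⟨by simp, fun hs => ha ?_⟩
      exact hs.subset (List.mem_replicate.mpr ⟨by omega, rfl⟩)
    have h2 : (b :: List.replicate (k - 1) a : List α) ∈
        {u : List α | u.length = k ∧ ¬ u.Sublist w} := by
      refine ⟨by simp; omega, fun hs => ha ?_⟩
      exact hs.subset (List.mem_cons_of_mem _ (List.mem_replicate.mpr ⟨by omega, rfl⟩))
    rw [hm] at h1 h2
    have heq : (List.replicate k a : List α) = b :: List.replicate (k - 1) a := by
      rw [h1, h2]
    have : (List.replicate k a : List α) = a :: List.replicate (k - 1) a := by
      conv_lhs => rw [show k = (k - 1) + 1 by omega, List.replicate_succ]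
    rw [this] at heq
    exact hb (List.cons.injEq .. ▸ heq).1.symm
  obtain ⟨c, hc1, hc2⟩ := my_exists_c huniv
  set n := myArchLen w with hn
  have key := fun u => my_key_iff hc1 hc2 u
  have hmne : m ≠ [] := by
    intro h
    have h0 := hmm.1
    rw [h] at h0
    simp at h0
    omega
  obtain ⟨m₀, m', rfl⟩ := List.exists_cons_of_ne_nil hmne
  have hmlen : m'.length = k - 1 := by
    have := hmm.1
    simp at this
    omega
  have hm₀ : m₀ ∈ w.take n := by
    have := myArchLen_mem huniv
    have h2 := this (Finset.mem_univ m₀)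
    rwa [List.mem_toFinset] at h2
  have hm'not : ¬ m'.Sublist (w.drop n) := fun hs => hmm.2 (my_anyletter hm₀ hs)
  have hcm : (c :: m' : List α) = m₀ :: m' := by
    have hns : ¬ (c :: m').Sublist w := fun hs => hm'not ((key m').mp hs)
    have hmem : (c :: m' : List α) ∈ {u : List α | u.length = k ∧ ¬ u.Sublist w} := by
      refine ⟨?_, hns⟩
      simp only [List.length_cons, hmlen]
      omega
    rw [hm] at hmem
    exact hmem
  have hset : {u : List α | u.length = k - 1 ∧ ¬ u.Sublist (w.drop n)} = {m'} := by
    ext u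
    simp only [Set.mem_setOf_eq, Set.mem_singleton_iff]
    constructor
    · rintro ⟨hul, hus⟩
      have hns : ¬ (c :: u).Sublist w := fun hs => hus ((key u).mp hs)
      have hmem : (c :: u : List α) ∈ {u : List α | u.length = k ∧ ¬ u.Sublist w} := by
        refine ⟨?_, hns⟩
        simp only [List.length_cons, hul]
        omega
      rw [hm] at hmem
      rw [← hcm, Set.mem_singleton_iff] at hmem
      exact (List.cons_eq_cons.mp hmem).2
    · rintro rfl
      exact ⟨hmlen, hm'not⟩
  refine ⟨huniv, (my_nearly_iff _ _).mpr ?_⟩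
  rw [hset]
  exact Set.ncard_singleton _

end MyAux

/-- Cutting off the first `ℓ` arches of a nearly `k`-universal word yields a
nearly `(k-ℓ)`-universal word. -/
theorem stmt_4 {α : Type*} [Fintype α] [DecidableEq α]
    (hσ : 2 ≤ Fintype.card α) {k ℓ : ℕ} (hk : 1 ≤ k) (hℓ : ℓ ≤ k - 1)
    (w : List α) (hw : NearlyUniv α k w) :
    NearlyUniv α (k - ℓ) (((archList w).drop ℓ).flatten ++ rest w) := by
  have hne : Nonempty α := Fintype.card_pos_iff.mp (by omega)
  have main : ∀ ℓ k : ℕ, 1 ≤ k → ℓ ≤ k - 1 → ∀ w : List α, NearlyUniv α k w →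
      NearlyUniv α (k - ℓ) (((archList w).drop ℓ).flatten ++ rest w) := by
    intro ℓ
    induction ℓ with
    | zero =>
      intro k hk hℓ w hw
      simp only [Nat.sub_zero, List.drop_zero]
      rw [my_flatten_arch w.length w le_rfl]
      exact hw
    | succ ℓ ih =>
      intro k hk hℓ w hw
      have hk2 : 2 ≤ k := by omega
      obtain ⟨huniv, hstep⟩ := my_step hσ hk2 w hw
      obtain ⟨h1, h2⟩ := my_archList_pos huniv
      rw [h1, h2, List.drop_succ_cons]
      have hres := ih (k - 1) (by omega) (by omega) (w.drop (myArchLen w)) hstep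
      have hkk : k - (ℓ + 1) = k - 1 - ℓ := by omega
      rw [hkk]
      exact hres
  exact main ℓ k hk hℓ w hw
end

section
/- Let Σ be a finite alphabet with σ := |Σ| ≥ 2 and let k ≥ 1. For every word w ∈ Σ*, the word w·w^R is nearly (2k−1)-universal if and only if w is nearly k-universal. -/
namespace Stmt8Aux

set_option linter.unusedSectionVars false

variable {α : Type*} [Fintype α] [DecidableEq α]

/-- The set of length-`k` words missing from `w`. -/
def Missing (k : ℕ) (w : List α) : Set (List α) :=
  {u | u.length = k ∧ ¬ u.Sublist w}

lemma card_allLen (n : ℕ) :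
    ({u : List α | u.length = n}).ncard = Fintype.card α ^ n := by
  have e : {u : List α | u.length = n} ≃ List.Vector α n := Equiv.refl _
  rw [← Nat.card_coe_set_eq, Nat.card_congr e, Nat.card_eq_fintype_card, card_vector]

lemma finite_allLen (n : ℕ) : ({u : List α | u.length = n}).Finite := by
  have e : {u : List α | u.length = n} ≃ List.Vector α n := Equiv.refl _
  exact Set.finite_coe_iff.mp (Finite.of_equiv _ e.symm)

lemma nearly_iff (hσ : 2 ≤ Fintype.card α) (k : ℕ) (w : List α) :
    NearlyUniv α k w ↔ (Missing k w).ncard = 1 := by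
  have hMsub : Missing k w ⊆ {u : List α | u.length = k} := fun u hu => hu.1
  have hfin := finite_allLen (α := α) k
  have hdiff : ScatFact k w = {u : List α | u.length = k} \ Missing k w := by
    ext u
    simp only [ScatFact, Missing, Set.mem_diff, Set.mem_setOf_eq]
    tauto
  have hM : (Missing k w).ncard ≤ Fintype.card α ^ k := by
    rw [← card_allLen (α := α) k]
    exact Set.ncard_le_ncard hMsub hfin
  have h1 : 1 ≤ Fintype.card α ^ k := Nat.one_le_pow _ _ (by omega)
  rw [NearlyUniv, hdiff, Set.ncard_diff hMsub (hfin.subset hMsub), card_allLen]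
  omega

lemma missing_singleton (hσ : 2 ≤ Fintype.card α) {k : ℕ} {w : List α}
    (h : NearlyUniv α k w) : ∃ u, Missing k w = {u} :=
  Set.ncard_eq_one.mp ((nearly_iff hσ k w).mp h)

/-- Near `k`-universality implies `(k-1)`-universality. -/
lemma sub_univ (hσ : 2 ≤ Fintype.card α) {k : ℕ} {w u : List α}
    (h : Missing k w = {u}) {s : List α} (hs : s.length = k - 1) (hk : 1 ≤ k) :
    s.Sublist w := by
  obtain ⟨a, b, hab⟩ := Fintype.exists_pair_of_one_lt_card (α := α) (by omega)
  have hlen : ∀ c : α, (s ++ [c]).length = k := by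
    intro c; simp [hs]; omega
  by_contra hsw
  have hnot : ∀ c : α, ¬ (s ++ [c]).Sublist w := by
    intro c hc
    exact hsw ((List.sublist_append_left s [c]).trans hc)
  have ha : s ++ [a] ∈ Missing k w := ⟨hlen a, hnot a⟩
  have hb : s ++ [b] ∈ Missing k w := ⟨hlen b, hnot b⟩
  rw [h, Set.mem_singleton_iff] at ha hb
  exact hab (by have := ha.trans hb.symm; simpa using this)

/-- The candidate missing word for `w ++ w.reverse`. -/
def zword (k : ℕ) (u : List α) : List α := u ++ (u.take (k-1)).reverse

lemma zword_length {k : ℕ} {u : List α} (hu : u.length = k) (hk : 1 ≤ k) :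
    (zword k u).length = 2*k - 1 := by
  simp [zword, hu]; omega

lemma zword_drop {k : ℕ} {u : List α} (hu : u.length = k) (hk : 1 ≤ k) :
    (zword k u).drop (k-1) = u.reverse := by
  have h1 : (u.drop (k-1)).length = 1 := by simp [hu]; omega
  obtain ⟨a, ha⟩ := List.length_eq_one_iff.mp h1
  have : u.reverse = u.drop (k-1) ++ (u.take (k-1)).reverse := by
    conv_lhs => rw [← List.take_append_drop (k-1) u]
    rw [List.reverse_append, ha]
    simp
  rw [zword, List.drop_append, this]
  have h0 : k - 1 - u.length = 0 := by omega
  rw [h0, List.drop_zero]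

/-- If `u` (of length `k`) is missing from `w`, then `zword k u` is missing
from `w ++ w.reverse`. -/
lemma zword_missing (hσ : 2 ≤ Fintype.card α) {k : ℕ} (hk : 1 ≤ k) {w u : List α}
    (hu : u.length = k) (hnw : ¬ u.Sublist w) :
    ¬ (zword k u).Sublist (w ++ w.reverse) := by
  intro hz
  rw [List.sublist_append_iff] at hz
  obtain ⟨z1, z2, hsplit, h1, h2⟩ := hz
  have hlen : z1.length + z2.length = 2*k - 1 := by
    have := congrArg List.length hsplit
    simp at this
    rw [zword_length hu hk] at this
    omega
  by_cases hc : k ≤ z1.length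
  · -- u is a prefix of z1
    apply hnw
    have htk : (zword k u).take k = u := List.take_left' hu
    have : u = z1.take k := by
      rw [← htk, hsplit, List.take_append]
      have : k - z1.length = 0 := by omega
      rw [this]
      simp
    rw [this]
    exact (List.take_sublist k z1).trans h1
  · -- u.reverse is a suffix of z2
    apply hnw
    rw [← List.reverse_sublist, ← zword_drop hu hk]
    have hz2 : z2 = (zword k u).drop z1.length := by
      rw [hsplit, List.drop_left]
    have : (zword k u).drop (k-1) = z2.drop (k-1 - z1.length) := by
      rw [hz2, List.drop_drop]
      congr 1
      omega
    rw [this]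
    exact (List.drop_sublist _ z2).trans h2

end Stmt8Aux

namespace Stmt8Aux

lemma rev_decomp {k : ℕ} {u : List α} (hu : u.length = k) (hk : 1 ≤ k) :
    u.reverse = u.drop (k-1) ++ (u.take (k-1)).reverse := by
  have h1 : (u.drop (k-1)).length = 1 := by simp [hu]; omega
  obtain ⟨a, ha⟩ := List.length_eq_one_iff.mp h1
  conv_lhs => rw [← List.take_append_drop (k-1) u]
  rw [List.reverse_append, ha]
  simp

/-- A palindromic sublist lemma: if `s ++ s.reverse <+ w ++ w.reverse`
then `s <+ w`. -/
lemma pal_sub {s w : List α} (h : (s ++ s.reverse).Sublist (w ++ w.reverse)) :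
    s.Sublist w := by
  rw [List.sublist_append_iff] at h
  obtain ⟨a, b, hsplit, h1, h2⟩ := h
  by_cases hc : s.length ≤ a.length
  · have hs : s = a.take s.length := by
      have := List.take_left (l₁ := s) (l₂ := s.reverse)
      rw [hsplit, List.take_append] at this
      have h0 : s.length - a.length = 0 := by omega
      rw [h0] at this
      simpa using this.symm
    rw [hs]
    exact (List.take_sublist _ a).trans h1
  · rw [← List.reverse_sublist]
    have hs : s.reverse = b.drop (s.length - a.length) := by
      have hb : b = (s ++ s.reverse).drop a.length := by
        rw [hsplit, List.drop_left]
      rw [hb, List.drop_drop]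
      have : a.length + (s.length - a.length) = s.length := by omega
      rw [this, List.drop_left]
    rw [hs]
    exact (List.drop_sublist _ b).trans h2

theorem main {α : Type*} [Fintype α] [DecidableEq α]
    (hσ : 2 ≤ Fintype.card α) {k : ℕ} (hk : 1 ≤ k) (w : List α) :
    NearlyUniv α (2*k - 1) (w ++ w.reverse) ↔ NearlyUniv α k w := by
  have hk2 : 1 ≤ 2*k - 1 := by omega
  constructor
  · -- ⇒
    intro h
    obtain ⟨z0, hz0⟩ := missing_singleton hσ h
    have hz0mem : z0 ∈ Missing (2*k-1) (w ++ w.reverse) := hz0 ▸ rfl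
    -- Missing k w is nonempty
    have hne : (Missing k w).Nonempty := by
      by_contra hne
      rw [Set.not_nonempty_iff_eq_empty] at hne
      have hall : ∀ v : List α, v.length = k → v.Sublist w := by
        intro v hv
        by_contra hvw
        exact absurd (hne ▸ (⟨hv, hvw⟩ : v ∈ Missing k w) : v ∈ (∅ : Set (List α))) (Set.notMem_empty v)
      have hshort : ∀ v : List α, v.length = k - 1 → v.Sublist w := by
        intro v hv
        obtain ⟨a, b, -⟩ := Fintype.exists_pair_of_one_lt_card (α := α) (by omega)
        have : (v ++ [a]).Sublist w := hall _ (by simp [hv]; omega)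
        exact (List.sublist_append_left v [a]).trans this
      apply hz0mem.2
      have hsplit : z0 = z0.take k ++ z0.drop k := (List.take_append_drop k z0).symm
      rw [hsplit]
      apply List.Sublist.append
      · exact hall _ (by simp [hz0mem.1]; omega)
      · rw [← List.reverse_sublist, List.reverse_reverse] at *
        exact hshort _ (by simp [hz0mem.1]; omega)
    obtain ⟨u, hu⟩ := hne
    rw [nearly_iff hσ, Set.ncard_eq_one]
    refine ⟨u, Set.eq_singleton_iff_unique_mem.mpr ⟨hu, fun u' hu' => ?_⟩⟩
    have m1 : zword k u' ∈ Missing (2*k-1) (w ++ w.reverse) :=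
      ⟨zword_length hu'.1 hk, zword_missing hσ hk hu'.1 hu'.2⟩
    have m2 : zword k u ∈ Missing (2*k-1) (w ++ w.reverse) :=
      ⟨zword_length hu.1 hk, zword_missing hσ hk hu.1 hu.2⟩
    rw [hz0, Set.mem_singleton_iff] at m1 m2
    have : zword k u' = zword k u := m1.trans m2.symm
    have := congrArg (List.take k) this
    rwa [zword, zword, List.take_left' hu'.1, List.take_left' hu.1] at this
  · -- ⇐
    intro h
    obtain ⟨u, hu⟩ := missing_singleton hσ h
    have humem : u ∈ Missing k w := hu ▸ rfl
    rw [nearly_iff hσ, Set.ncard_eq_one]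
    refine ⟨zword k u, Set.eq_singleton_iff_unique_mem.mpr
      ⟨⟨zword_length humem.1 hk, zword_missing hσ hk humem.1 humem.2⟩, fun v hv => ?_⟩⟩
    obtain ⟨hvlen, hvw⟩ := hv
    -- claim 1 : v.take k = u
    have hvtk : (v.take k).length = k := by simp [hvlen]; omega
    have claim1 : v.take k = u := by
      by_contra hne
      apply hvw
      have hsplit : v = v.take k ++ v.drop k := (List.take_append_drop k v).symm
      rw [hsplit]
      apply List.Sublist.append
      · by_contra hsub
        have : v.take k ∈ Missing k w := ⟨hvtk, hsub⟩
        rw [hu, Set.mem_singleton_iff] at this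
        exact hne this
      · rw [← List.reverse_sublist, List.reverse_reverse]
        exact sub_univ hσ hu (by simp [hvlen]; omega) hk
    -- claim 2 : v.drop (k-1) = u.reverse
    have claim2 : v.drop (k-1) = u.reverse := by
      have hlen : ((v.drop (k-1)).reverse).length = k := by simp [hvlen]; omega
      have : (v.drop (k-1)).reverse = u := by
        by_contra hne
        apply hvw
        have hsplit : v = v.take (k-1) ++ v.drop (k-1) := (List.take_append_drop (k-1) v).symm
        rw [hsplit]
        apply List.Sublist.append
        · exact sub_univ hσ hu (by simp [hvlen]; omega) hk
        · rw [← List.reverse_sublist, List.reverse_reverse]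
          by_contra hsub
          have : (v.drop (k-1)).reverse ∈ Missing k w := ⟨hlen, hsub⟩
          rw [hu, Set.mem_singleton_iff] at this
          exact hne this
      rw [← this, List.reverse_reverse]
    -- assemble
    have hvt : v.take (k-1) = u.take (k-1) := by
      rw [← claim1, List.take_take]
      congr 1
      omega
    calc v = v.take (k-1) ++ v.drop (k-1) := (List.take_append_drop (k-1) v).symm
      _ = u.take (k-1) ++ u.reverse := by rw [hvt, claim2]
      _ = u.take (k-1) ++ (u.drop (k-1) ++ (u.take (k-1)).reverse) := by
          rw [← rev_decomp humem.1 hk]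
      _ = (u.take (k-1) ++ u.drop (k-1)) ++ (u.take (k-1)).reverse := by
          rw [List.append_assoc]
      _ = zword k u := by rw [List.take_append_drop, zword]

end Stmt8Aux


/-- `w·w^R` is nearly `(2k-1)`-universal iff `w` is nearly `k`-universal. -/
theorem stmt_8 {α : Type*} [Fintype α] [DecidableEq α]
    (hσ : 2 ≤ Fintype.card α) {k : ℕ} (hk : 1 ≤ k) (w : List α) :
    NearlyUniv α (2*k - 1) (w ++ w.reverse) ↔ NearlyUniv α k w := by
  exact Stmt8Aux.main hσ hk w
end

section
/- Let Σ be a finite alphabet with σ := |Σ| ≥ 2 and let k ≥ 1. For every word u ∈ Σ^k there exists a word w ∈ Σ* with ScatFact_k(w) = Σ^k ∖ {u}, i.e., a nearly k-universal word whose unique absent scattered factor of length k is u. -/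
section Aux

variable {α : Type*} [Fintype α] [DecidableEq α]

/-- The letters different from `a`, as a list. -/
noncomputable def myD (a : α) : List α := (Finset.univ.erase a).toList

lemma mem_myD {a b : α} : b ∈ myD a ↔ b ≠ a := by
  simp [myD]

/-- Two copies of the letters different from `a`. -/
noncomputable def myE (a : α) : List α := myD a ++ myD a

lemma mem_myE {a b : α} : b ∈ myE a ↔ b ≠ a := by
  simp [myE, mem_myD]

/-- The witness word. -/
noncomputable def myW : List α → List α
  | [] => []
  | [a] => myE a
  | a :: b :: s => myE a ++ a :: myW (b :: s)

lemma cons_sublist_right_of_not_mem {c : α} {t x y : List α}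
    (h : List.Sublist (c :: t) (x ++ y)) (hc : c ∉ x) : List.Sublist (c :: t) y := by
  induction x with
  | nil => simpa using h
  | cons d x' ih =>
    simp only [List.cons_append] at h
    cases h with
    | cons _ h' => exact ih h' (fun hm => hc (List.mem_cons_of_mem _ hm))
    | cons_cons _ h' => exact absurd (List.mem_cons_self (a := c) (l := x')) hc

lemma tail_of_cons_sublist_cons {a : α} {s W : List α}
    (h : List.Sublist (a :: s) (a :: W)) : List.Sublist s W := by
  cases h with
  | cons _ h' => exact ((List.sublist_cons_self a s).trans h')
  | cons_cons _ h' => exact h'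

lemma sublist_myW_of_lt (u : List α) : ∀ x : List α, x.length < u.length → x.Sublist (myW u) := by
  induction u using myW.induct with
  | case1 => intro x hx; simp at hx
  | case2 a =>
    intro x hx
    have : x = [] := List.length_eq_zero_iff.mp (Nat.lt_one_iff.mp hx)
    simp [this]
  | case3 a b s ih =>
    intro x hx
    match x with
    | [] => exact List.nil_sublist _
    | y :: x' =>
      have h2 : x'.Sublist (myW (b :: s)) := ih x' (Nat.lt_of_succ_lt_succ hx)
      have h1 : List.Sublist [y] (myE a ++ [a]) := by
        rw [List.singleton_sublist]
        by_cases hy : y = a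
        · simp [hy]
        · simp [mem_myE, hy]
      have := h1.append h2
      simpa [myW, List.append_assoc] using this

lemma myW_spec : ∀ u v : List α, u ≠ [] → v.length = u.length →
    (v.Sublist (myW u) ↔ v ≠ u) := by
  intro u
  induction u using myW.induct with
  | case1 => intro v h; exact absurd rfl h
  | case2 a =>
    intro v _ hv
    match v with
    | [b] =>
      simp only [myW, List.singleton_sublist, mem_myE]
      constructor
      · intro hb he; exact hb (by injection he)
      · intro hb he; exact hb (by rw [he])
  | case3 a b s ih =>
    intro v _ hv
    match v with
    | c :: t =>
      have ht : t.length = (b :: s).length := by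
        simpa using hv
      constructor
      · -- forward: if v is a sublist then v ≠ u
        intro h he
        rw [he] at h
        have ha : a ∉ myE a := by simp [mem_myE]
        have h' : List.Sublist (a :: b :: s) (a :: myW (b :: s)) :=
          cons_sublist_right_of_not_mem (by simpa [myW] using h) ha
        have := tail_of_cons_sublist_cons h'
        exact ((ih (b :: s) (by simp) rfl).mp this) rfl
      · -- backward
        intro hne
        show List.Sublist (c :: t) (myW (a :: b :: s))
        rw [myW]
        by_cases hc : c = a
        · subst hc
          have htne : t ≠ b :: s := fun h => hne (by rw [h])
          have hW : t.Sublist (myW (b :: s)) := (ih t (by simp) ht).mpr htne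
          exact ((hW.cons₂ c).trans (List.sublist_append_right _ _))
        · by_cases htb : t = b :: s
          · subst htb
            by_cases hb : b = a
            · subst hb
              have hs : s.Sublist (myW (b :: s)) :=
                sublist_myW_of_lt _ s (Nat.lt_succ_self _)
              have h1 : List.Sublist [c] (myE b) := by
                rw [List.singleton_sublist, mem_myE]; exact hc
              simpa using h1.append (hs.cons₂ b)
            · have hs : s.Sublist (myW (b :: s)) :=
                sublist_myW_of_lt _ s (Nat.lt_succ_self _)
              have h1 : List.Sublist [c] (myD a) := by
                rw [List.singleton_sublist, mem_myD]; exact hc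
              have h2 : List.Sublist [b] (myD a) := by
                rw [List.singleton_sublist, mem_myD]; exact hb
              have h3 : List.Sublist s (a :: myW (b :: s)) :=
                hs.trans (List.sublist_cons_self _ _)
              have := h1.append (h2.append h3)
              simpa [myE, List.append_assoc] using this
          · have hW : t.Sublist (myW (b :: s)) := (ih t (by simp) ht).mpr htb
            have h1 : List.Sublist [c] (myE a) := by
              rw [List.singleton_sublist, mem_myE]; exact hc
            have h3 : List.Sublist t (a :: myW (b :: s)) :=
              hW.trans (List.sublist_cons_self _ _)
            simpa using h1.append h3

end Aux

/-- For every `u ∈ Σ^k` there is a word `w` whose scattered factors of length `k`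
are exactly `Σ^k \ {u}`. -/
theorem stmt_10 {α : Type*} [Fintype α] [DecidableEq α]
    (hσ : 2 ≤ Fintype.card α) {k : ℕ} (hk : 1 ≤ k)
    (u : List α) (hu : u.length = k) :
    ∃ w : List α, ScatFact k w = {v : List α | v.length = k} \ {u} := by
  refine ⟨myW u, ?_⟩
  have hune : u ≠ [] := by
    intro h; rw [h] at hu; simp at hu; omega
  ext v
  simp only [ScatFact, Set.mem_setOf_eq, Set.mem_diff, Set.mem_singleton_iff]
  constructor
  · rintro ⟨hl, hs⟩
    exact ⟨hl, (myW_spec u v hune (by rw [hl, hu])).mp hs⟩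
  · rintro ⟨hl, hne⟩
    exact ⟨hl, (myW_spec u v hune (by rw [hl, hu])).mpr hne⟩
end

section
/- Let Σ be a finite alphabet with σ := |Σ| ≥ 2, let k ≥ 1 and let u ∈ Σ^k with condensation cond(u) = u_1⋯u_r (so u consists of r maximal blocks of equal consecutive letters). Then the minimal length of a word w ∈ Σ* with ScatFact_k(w) = Σ^k ∖ {u} is kσ + r − 2. In particular, if u is unary (r = 1), this minimal length is kσ − 1. -/
section AuxLemmas

open List

variable {α : Type*} [Fintype α] [DecidableEq α]

/-- An enumeration of all letters different from `a`. -/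
noncomputable def enumEx (a : α) : List α := (Finset.univ.erase a).toList

lemma mem_enumEx {a b : α} : b ∈ enumEx a ↔ b ≠ a := by
  simp [enumEx]

lemma not_mem_enumEx (a : α) : a ∉ enumEx a := by simp [mem_enumEx]

lemma length_enumEx (a : α) : (enumEx a).length = Fintype.card α - 1 := by
  simp [enumEx, Finset.card_erase_of_mem]

/-- The witness word: `Wd u` is a shortest word whose scattered factors of
length `|u|` are exactly all words of length `|u|` except `u`. -/
noncomputable def Wd : List α → List α
  | [] => []
  | [a] => enumEx a
  | a :: b :: t => enumEx a ++ (if b ≠ a then [b] else []) ++ a :: Wd (b :: t)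

lemma cons_sublist_of_ne {c a : α} {s l : List α} (hca : c ≠ a)
    (h : (c :: s) <+ (a :: l)) : (c :: s) <+ l := by
  cases h with
  | cons _ h' => exact h'
  | cons_cons _ h' => exact absurd rfl hca

lemma cons_sublist_append_iff {c : α} {t A B : List α} (h : c ∉ A) :
    (c :: t) <+ A ++ B ↔ (c :: t) <+ B := by
  constructor
  · intro hs
    rcases List.sublist_append_iff.1 hs with ⟨x, y, hxy, hxA, hyB⟩
    cases x with
    | nil =>
      have h' : c :: t = y := by simpa using hxy
      rw [h']; exact hyB
    | cons d x' =>
      exfalso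
      apply h
      have : d ∈ A := hxA.subset (List.mem_cons_self (a := d) (l := x'))
      have hd : d = c := by
        have := congrArg (List.head? ·) hxy
        simpa using this.symm
      rwa [hd] at this
  · intro hs
    exact hs.trans (List.sublist_append_right A B)

lemma Wd_avoid : ∀ u : List α, u ≠ [] → ¬ u <+ Wd u
  | [], h => absurd rfl h
  | [a], _ => by
      rw [Wd]
      intro h
      exact not_mem_enumEx a (List.singleton_sublist.1 h)
  | a :: b :: t, _ => by
      rw [Wd]
      intro h
      have hnotmem : a ∉ enumEx a ++ (if b ≠ a then [b] else []) := by
        simp only [List.mem_append]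
        rintro (h1 | h2)
        · exact not_mem_enumEx a h1
        · by_cases hba : b ≠ a
          · simp [hba] at h2
            exact hba h2.symm
          · simp [hba] at h2
      have h2 : (a :: b :: t) <+ a :: Wd (b :: t) :=
        (cons_sublist_append_iff hnotmem).1 h
      have h3 : (b :: t) <+ Wd (b :: t) := List.cons_sublist_cons.1 h2
      exact Wd_avoid (b :: t) (by simp) h3

lemma Wd_contains : ∀ u : List α, u ≠ [] →
    ∀ v : List α, v.length ≤ u.length → v ≠ u → v <+ Wd u
  | [], h => absurd rfl h
  | [a], _ => by
      intro v hv hne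
      match v, hv with
      | [], _ => exact List.nil_sublist _
      | [c], _ =>
        rw [Wd, List.singleton_sublist, mem_enumEx]
        intro hc
        exact hne (by rw [hc])
  | a :: b :: t, _ => by
      intro v hv hne
      rw [Wd]
      have hWT : Wd (b :: t) <+ (if b ≠ a then [b] else []) ++ a :: Wd (b :: t) := by
        refine List.Sublist.trans ?_ (List.sublist_append_right _ _)
        exact List.sublist_cons_self a _
      match v with
      | [] => exact List.nil_sublist _
      | c :: s =>
        have hslen : s.length ≤ (b :: t).length := by
          simpa using hv
        by_cases hca : c = a
        · subst hca
          have hsne : s ≠ b :: t := by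
            intro hs; exact hne (by rw [hs])
          have hs : s <+ Wd (b :: t) := Wd_contains (b :: t) (by simp) s hslen hsne
          have : (c :: s) <+ c :: Wd (b :: t) := List.cons_sublist_cons.2 hs
          exact this.trans ((List.sublist_append_right _ _))
        · -- c ≠ a : use the occurrence of c in enumEx a
          have hc : [c] <+ enumEx a := List.singleton_sublist.2 (mem_enumEx.2 hca)
          rw [List.append_assoc]
          by_cases hsT : s = b :: t
          · subst hsT
            by_cases hba : b = a
            · -- use the explicit letter a
              subst hba
              have ht : t <+ Wd (b :: t) :=
                Wd_contains (b :: t) (by simp) t (by simp) (by simp)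
              have h1 : (b :: t) <+ (if b ≠ b then [b] else []) ++ b :: Wd (b :: t) := by
                rw [if_neg (by simp), List.nil_append]
                exact List.cons_sublist_cons.2 ht
              exact hc.append h1
            · -- use the extra letter b
              have ht : t <+ Wd (b :: t) :=
                Wd_contains (b :: t) (by simp) t (by simp) (by simp)
              have h1 : (b :: t) <+ (if b ≠ a then [b] else []) ++ a :: Wd (b :: t) := by
                rw [if_pos hba]
                refine List.cons_sublist_cons.2 ?_
                exact ht.trans (List.sublist_cons_self a _)
              exact hc.append h1
          · have hs : s <+ Wd (b :: t) := Wd_contains (b :: t) (by simp) s hslen hsT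
            exact hc.append (hs.trans hWT)

lemma destutter_len_cons_cons (a b : α) (t : List α) :
    (List.destutter (· ≠ ·) (a :: b :: t)).length =
      (if b = a then 0 else 1) + (List.destutter (· ≠ ·) (b :: t)).length := by
  rw [List.destutter_cons_cons]
  by_cases h : b = a
  · subst h
    simp [List.destutter]
  · rw [if_pos (Ne.symm h), if_neg h]
    simp [List.destutter]
    omega

lemma Wd_length (hσ : 2 ≤ Fintype.card α) :
    ∀ u : List α, u ≠ [] →
      (Wd u).length + 2 = u.length * Fintype.card α + (u.destutter (· ≠ ·)).length
  | [], h => absurd rfl h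
  | [a], _ => by
      rw [Wd, length_enumEx]
      simp only [List.destutter_singleton, List.length_singleton, one_mul]
      omega
  | a :: b :: t, _ => by
      have ih := Wd_length hσ (b :: t) (by simp)
      rw [Wd]
      simp only [List.length_append, List.length_cons, length_enumEx]
      rw [destutter_len_cons_cons]
      simp only [List.length_cons] at ih
      have hm : (t.length + 1 + 1) * Fintype.card α
          = Fintype.card α + (t.length + 1) * Fintype.card α := by ring
      by_cases h : b = a
      · subst h
        rw [if_neg (show ¬ (b ≠ b) by simp), if_pos rfl]
        simp only [List.length_nil]
        omega
      · rw [if_pos (show b ≠ a from h), if_neg h]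
        simp only [List.length_singleton]
        omega

lemma scatfact_eq_iff {k : ℕ} (w u : List α) (hu : u.length = k) :
    ScatFact k w = {v : List α | v.length = k} \ {u} ↔
      (¬ u <+ w ∧ ∀ v : List α, v.length = k → v ≠ u → v <+ w) := by
  constructor
  · intro h
    constructor
    · intro hs
      have : u ∈ ScatFact k w := ⟨hu, hs⟩
      rw [h] at this
      exact this.2 rfl
    · intro v hv hne
      have : v ∈ ({v : List α | v.length = k} \ {u} : Set (List α)) := ⟨hv, hne⟩
      rw [← h] at this
      exact this.2
  · rintro ⟨h1, h2⟩
    ext v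
    constructor
    · rintro ⟨hv, hs⟩
      refine ⟨hv, ?_⟩
      intro he
      rw [Set.mem_singleton_iff] at he
      subst he
      exact h1 hs
    · rintro ⟨hv, hne⟩
      exact ⟨hv, h2 v hv hne⟩

lemma exists_ne_of_length {n : ℕ} (hn : 1 ≤ n) (t : List α) (hσ : 2 ≤ Fintype.card α) :
    ∃ s : List α, s.length = n ∧ s ≠ t := by
  obtain ⟨x, y, hxy⟩ := Fintype.exists_pair_of_one_lt_card hσ
  by_cases h : t = List.replicate n x
  · refine ⟨List.replicate n y, by simp, ?_⟩
    intro he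
    rw [h] at he
    have : y = x := by
      have h1 : y ∈ List.replicate n y := by
        simp [List.mem_replicate]; omega
      rw [he] at h1
      exact (List.eq_of_mem_replicate h1)
    exact hxy this.symm
  · exact ⟨List.replicate n x, by simp, fun he => h (he.symm)⟩

lemma split_first_mem {a : α} : ∀ {w : List α}, a ∈ w →
    ∃ g w', w = g ++ a :: w' ∧ a ∉ g := by
  intro w hw
  induction w with
  | nil => simp at hw
  | cons c w ih =>
    by_cases hca : c = a
    · exact ⟨[], w, by simp [hca], by simp⟩
    · have : a ∈ w := by
        rcases List.mem_cons.1 hw with h | h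
        · exact absurd h.symm hca
        · exact h
      obtain ⟨g, w', hgw, hag⟩ := ih this
      refine ⟨c :: g, w', by simp [hgw], ?_⟩
      simp only [List.mem_cons]
      rintro (h | h)
      · exact hca h.symm
      · exact hag h

lemma lower_bound (hσ : 2 ≤ Fintype.card α) :
    ∀ u : List α, u ≠ [] → ∀ w : List α,
      (¬ u <+ w) → (∀ v : List α, v.length = u.length → v ≠ u → v <+ w) →
      u.length * Fintype.card α + (u.destutter (· ≠ ·)).length ≤ w.length + 2
  | [], h => absurd rfl h
  | [a], _ => by
      intro w hn hall
      have haw : a ∉ w := fun h => hn (List.singleton_sublist.2 h)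
      have hsub : Finset.univ.erase a ⊆ w.toFinset := by
        intro c hc
        rw [Finset.mem_erase] at hc
        have : [c] <+ w := hall [c] rfl (by simp [hc.1])
        simpa using List.singleton_sublist.1 this
      have h1 : Fintype.card α - 1 ≤ w.toFinset.card := by
        have := Finset.card_le_card hsub
        simpa [Finset.card_erase_of_mem] using this
      have h2 := List.toFinset_card_le w
      have hd : (List.destutter (· ≠ ·) [a]).length = 1 := by
        simp [List.destutter]
      simp only [List.length_singleton, one_mul]
      omega
  | a :: b :: t, _ => by
      intro w hn hall
      set T : List α := b :: t with hT
      -- a occurs in w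
      obtain ⟨s0, hs0len, hs0ne⟩ := exists_ne_of_length (n := T.length) (by simp [hT]) T hσ
      have haw : a ∈ w := by
        have h1 : (a :: s0) <+ w := by
          apply hall
          · simp [hs0len]
          · simp [hs0ne]
        exact h1.subset (List.mem_cons_self (a := a) (l := s0))
      obtain ⟨g, w', hgw, hag⟩ := split_first_mem haw
      subst hgw
      -- T is not a subsequence of w'
      have htn : ¬ T <+ w' := by
        intro h
        apply hn
        exact ((List.cons_sublist_cons.2 h).trans (List.sublist_append_right g _))
      -- every other word of length |T| is a subsequence of w'
      have hall' : ∀ v : List α, v.length = T.length → v ≠ T → v <+ w' := by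
        intro v hv hvne
        have h1 : (a :: v) <+ g ++ a :: w' := by
          apply hall
          · simp [hv]
          · simp [hvne]
        have h2 : (a :: v) <+ a :: w' := (cons_sublist_append_iff hag).1 h1
        exact List.cons_sublist_cons.1 h2
      have ih := lower_bound hσ T (by simp [hT]) w' htn hall'
      -- every letter other than a occurs in g
      have hg1 : ∀ c : α, c ≠ a → c ∈ g := by
        intro c hca
        by_contra hcg
        have h1 : (c :: T) <+ g ++ a :: w' := by
          apply hall
          · simp [hT]
          · simp [hca]
        have h2 : (c :: T) <+ a :: w' := (cons_sublist_append_iff hcg).1 h1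
        have h3 : (c :: T) <+ w' := cons_sublist_of_ne hca h2
        exact htn ((List.sublist_cons_self c T).trans h3)
      have hgsub : Finset.univ.erase a ⊆ g.toFinset := by
        intro c hc
        rw [Finset.mem_erase] at hc
        simpa using hg1 c hc.1
      have hglen : Fintype.card α - 1 ≤ g.length := by
        have h1 := Finset.card_le_card hgsub
        have h2 := List.toFinset_card_le g
        simp [Finset.card_erase_of_mem] at h1
        omega
      have hwlen : (g ++ a :: w').length = g.length + 1 + w'.length := by
        simp; omega
      have hmul : (a :: T).length * Fintype.card α
          = Fintype.card α + T.length * Fintype.card α := by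
        simp only [List.length_cons]
        ring
      rw [destutter_len_cons_cons]
      by_cases hba : b = a
      · -- no extra letter needed
        rw [if_pos hba, ← hT]
        omega
      · -- extra letter: g contains b at least twice
        rw [if_neg hba, ← hT]
        have hbb : [b, b] <+ g := by
          have h1 : (b :: T) <+ g ++ a :: w' := by
            apply hall
            · simp [hT]
            · simp [hba]
          rcases List.sublist_append_iff.1 h1 with ⟨x, y, hxy, hxg, hyw⟩
          match x, hxy with
          | [], hxy =>
            exfalso
            have h2 : (b :: T) <+ a :: w' := by rw [hxy]; simpa using hyw
            exact htn ((List.sublist_cons_self b T).trans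
              (cons_sublist_of_ne hba h2))
          | [c], hxy =>
            exfalso
            have hc : b = c := by
              have := congrArg List.head? hxy
              simpa using this
            have hy : T = y := by
              have := congrArg List.tail hxy
              simpa using this
            rw [← hy] at hyw
            have h3 : T <+ w' := by
              rw [hT] at hyw ⊢
              exact cons_sublist_of_ne hba hyw
            exact htn h3
          | c :: d :: x', hxy =>
            rw [hT] at hxy
            simp only [List.cons_append] at hxy
            obtain ⟨hc, hd, -⟩ : b = c ∧ b = d ∧ t = x' ++ y := by
              refine ⟨?_, ?_, ?_⟩
              · exact (List.cons.injEq _ _ _ _ ▸ hxy).1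
              · exact ((List.cons.injEq _ _ _ _ ▸ hxy).2 |> fun h => (List.cons.injEq _ _ _ _ ▸ h).1)
              · exact ((List.cons.injEq _ _ _ _ ▸ hxy).2 |> fun h => (List.cons.injEq _ _ _ _ ▸ h).2)
            have hsub2 : ([b, b] : List α) <+ c :: d :: x' := by
              rw [← hc, ← hd]
              exact List.cons_sublist_cons.2 (List.cons_sublist_cons.2 (List.nil_sublist _))
            exact hsub2.trans hxg
        -- hence |g| ≥ σ
        have hglen2 : Fintype.card α ≤ g.length := by
          have hcount : 2 ≤ g.count b := by
            have := hbb.count_le b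
            simpa using this
          have hbmem : b ∈ g := hg1 b hba
          have hbg' : b ∈ g.erase b := by
            rw [← List.count_pos_iff]
            rw [List.count_erase_self]
            omega
          have hsub' : Finset.univ.erase a ⊆ (g.erase b).toFinset := by
            intro c hc
            rw [Finset.mem_erase] at hc
            rw [List.mem_toFinset]
            by_cases hcb : c = b
            · rw [hcb]; exact hbg'
            · rw [List.mem_erase_of_ne hcb]
              exact hg1 c hc.1
          have h1 := Finset.card_le_card hsub'
          have h2 := List.toFinset_card_le (g.erase b)
          have h3 : (g.erase b).length = g.length - 1 := List.length_erase_of_mem hbmem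
          simp [Finset.card_erase_of_mem] at h1
          have hglen0 : 1 ≤ g.length := List.length_pos_of_mem hbmem
          omega
        omega

end AuxLemmas

/-- The minimal length of a word `w` with `ScatFact_k(w) = Σ^k \ {u}` is
`kσ + r - 2`, where `r` is the length of the condensation of `u` (the number of
maximal blocks of equal consecutive letters). In particular it is `kσ - 1` for
unary `u`. -/
theorem stmt_11 {α : Type*} [Fintype α] [DecidableEq α]
    (hσ : 2 ≤ Fintype.card α) {k : ℕ} (hk : 1 ≤ k)
    (u : List α) (hu : u.length = k) :
    IsLeast {n : ℕ | ∃ w : List α, w.length = n ∧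
        ScatFact k w = {v : List α | v.length = k} \ {u}}
      (k * Fintype.card α + (u.destutter (· ≠ ·)).length - 2) ∧
    ((u.destutter (· ≠ ·)).length = 1 →
      IsLeast {n : ℕ | ∃ w : List α, w.length = n ∧
          ScatFact k w = {v : List α | v.length = k} \ {u}}
        (k * Fintype.card α - 1)) := by
  have hune : u ≠ [] := by
    intro h
    rw [h] at hu
    simp at hu
    omega
  have hlen := Wd_length hσ u hune
  rw [hu] at hlen
  have hmem : (k * Fintype.card α + (u.destutter (· ≠ ·)).length - 2) ∈
      {n : ℕ | ∃ w : List α, w.length = n ∧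
        ScatFact k w = {v : List α | v.length = k} \ {u}} := by
    refine ⟨Wd u, ?_, ?_⟩
    · omega
    · rw [scatfact_eq_iff _ u hu]
      refine ⟨Wd_avoid u hune, ?_⟩
      intro v hv hvne
      exact Wd_contains u hune v (by omega) hvne
  have hlb : ∀ n ∈ {n : ℕ | ∃ w : List α, w.length = n ∧
      ScatFact k w = {v : List α | v.length = k} \ {u}},
      k * Fintype.card α + (u.destutter (· ≠ ·)).length - 2 ≤ n := by
    rintro n ⟨w, hwlen, hwsf⟩
    rw [scatfact_eq_iff _ u hu] at hwsf
    have := lower_bound hσ u hune w hwsf.1 (by rw [hu]; exact hwsf.2)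
    rw [hu] at this
    omega
  constructor
  · exact ⟨hmem, hlb⟩
  · intro hr
    have heq : k * Fintype.card α - 1
        = k * Fintype.card α + (u.destutter (· ≠ ·)).length - 2 := by
      rw [hr]
      have : 2 ≤ k * Fintype.card α := by
        calc 2 = 1 * 2 := by ring
        _ ≤ k * Fintype.card α := Nat.mul_le_mul hk hσ
      omega
    rw [heq]
    exact ⟨hmem, hlb⟩
end

section
/- Let Σ be a finite alphabet with σ := |Σ| ≥ 2 and let k ≥ 1. The Simon congruence ∼_k restricted to the set of nearly k-universal words over Σ has exactly σ^k congruence classes; equivalently, the map sending a nearly k-universal word to its unique absent scattered factor of length k induces a bijection between the set of ∼_k-classes of nearly k-universal words and Σ^k. -/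
namespace Stmt12Aux
open List
variable {α : Type*} [Fintype α] [DecidableEq α]

set_option linter.unusedSectionVars false
set_option linter.unnecessarySimpa false

/-- All letters except `a`, as a list. -/
noncomputable def E (a : α) : List α := (Finset.univ.erase a).toList

lemma mem_E {a b : α} : b ∈ E a ↔ b ≠ a := by simp [E]

/-- Witness word whose unique missing length-`|u|` scattered factor is `u`. -/
noncomputable def W : List α → List α
  | [] => []
  | [a] => E a
  | a :: b :: t => E a ++ E a ++ a :: W (b :: t)

lemma cons_sublist_of_not_mem {x : α} {s L r : List α} (hx : x ∉ L)
    (h : (x :: s) <+ L ++ r) : (x :: s) <+ r := by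
  induction L with
  | nil => exact h
  | cons c L ih =>
    simp only [List.mem_cons, not_or] at hx
    cases h with
    | cons _ h => exact ih hx.2 h
    | cons_cons _ h => exact absurd rfl hx.1

lemma lemC : ∀ (t s : List α) (c : α), s.length ≤ t.length →
    s <+ (E c ++ [c]) ++ W t := by
  intro t
  induction t with
  | nil =>
    intro s c hs
    have : s = [] := List.length_eq_zero_iff.mp (Nat.le_zero.mp hs)
    simp [this]
  | cons d t' ih =>
    intro s c hs
    cases s with
    | nil => exact List.nil_sublist _
    | cons x s' =>
      have hx : x ∈ E c ++ [c] := by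
        rcases eq_or_ne x c with h | h <;> simp [mem_E, h]
      have hs' : s'.length ≤ t'.length := by simpa using hs
      have h2 : s' <+ W (d :: t') := by
        cases t' with
        | nil =>
          have : s' = [] := List.length_eq_zero_iff.mp (Nat.le_zero.mp hs')
          simp [this]
        | cons e t'' =>
          refine (ih s' d hs').trans ?_
          simp only [W, List.append_assoc, List.singleton_append]
          exact (List.sublist_append_right (E d) _).append_left (E d)
      exact (List.singleton_sublist.mpr hx).append h2

lemma lemB : ∀ (u v : List α), u ≠ [] → v.length = u.length → v ≠ u → v <+ W u := by
  intro u
  induction u with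
  | nil => intro v hu; exact absurd rfl hu
  | cons a t ih =>
    intro v _ hlen hne
    obtain ⟨b, s, rfl⟩ : ∃ b s, v = b :: s := by
      cases v with
      | nil => simp at hlen
      | cons b s => exact ⟨b, s, rfl⟩
    cases t with
    | nil =>
      have hs : s = [] := by simpa using hlen
      subst hs
      have hb : b ≠ a := by simpa using hne
      simpa [W, List.singleton_sublist, mem_E] using hb
    | cons d t' =>
      simp only [W]
      by_cases hb : b = a
      · subst hb
        have hst : s ≠ d :: t' := fun h => hne (by rw [h])
        have h1 : s <+ W (d :: t') := ih s (by simp) (by simpa using hlen) hst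
        exact (h1.cons₂ b).trans (by
          simpa [List.append_assoc] using
            List.sublist_append_right (E b ++ E b) (b :: W (d :: t')))
      · have h2 : s <+ (E a ++ [a]) ++ W (d :: t') :=
          lemC (d :: t') s a (le_of_eq (by simpa using hlen))
        have h3 : [b] <+ E a := List.singleton_sublist.mpr (mem_E.mpr hb)
        have h4 := h3.append h2
        have heq : E a ++ E a ++ a :: W (d :: t')
            = E a ++ ((E a ++ [a]) ++ W (d :: t')) := by simp
        rw [heq]
        exact h4

lemma lemA : ∀ (u : List α), u ≠ [] → ¬ u <+ W u := by
  intro u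
  induction u with
  | nil => simp
  | cons a t ih =>
    intro _ h
    cases t with
    | nil =>
      simp only [W, List.singleton_sublist, mem_E] at h
      exact h rfl
    | cons d t' =>
      simp only [W] at h
      have hna : a ∉ E a ++ E a := by simp [mem_E]
      have h2 := cons_sublist_of_not_mem hna (by simpa [List.append_assoc] using h)
      rw [List.cons_sublist_cons] at h2
      exact ih (by simp) h2

lemma scatFact_W {k : ℕ} (hk : 1 ≤ k) {u : List α} (hu : u.length = k) :
    ScatFact k (W u) = {v : List α | v.length = k} \ {u} := by
  have hune : u ≠ [] := by
    intro h; subst h; simp at hu; omega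
  ext v
  simp only [ScatFact, Set.mem_setOf_eq, Set.mem_diff, Set.mem_singleton_iff]
  constructor
  · rintro ⟨hv, hsub⟩
    refine ⟨hv, ?_⟩
    rintro rfl
    exact lemA v hune hsub
  · rintro ⟨hv, hne⟩
    exact ⟨hv, lemB u v hune (hv.trans hu.symm) hne⟩

lemma ncard_allk (k : ℕ) :
    ({v : List α | v.length = k}).ncard = Fintype.card α ^ k := by
  have e : ↥{v : List α | v.length = k} ≃ List.Vector α k :=
    Equiv.subtypeEquivRight (fun _ => Iff.rfl)
  rw [← Nat.card_coe_set_eq, Nat.card_congr e, Nat.card_eq_fintype_card,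
    card_vector]

lemma finite_allk (k : ℕ) : ({v : List α | v.length = k} : Set (List α)).Finite := by
  have e : ↥{v : List α | v.length = k} ≃ List.Vector α k :=
    Equiv.subtypeEquivRight (fun _ => Iff.rfl)
  haveI : Finite ↥{v : List α | v.length = k} := Finite.of_equiv _ e.symm
  exact Set.toFinite _

end Stmt12Aux

open Stmt12Aux in
/-- Simon's congruence `∼_k` restricted to nearly `k`-universal words has exactly
`σ^k` classes: the classes correspond bijectively to the possible sets of
scattered factors, i.e. to the `σ^k` possible absent words of `Σ^k`. -/
theorem stmt_12 {α : Type*} [Fintype α] [DecidableEq α]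
    (hσ : 2 ≤ Fintype.card α) {k : ℕ} (hk : 1 ≤ k) :
    {S : Set (List α) | ∃ w : List α, NearlyUniv α k w ∧ ScatFact k w = S}.ncard =
      Fintype.card α ^ k := by
  classical
  set Allk : Set (List α) := {v : List α | v.length = k} with hA
  have hfin : Allk.Finite := finite_allk k
  have hcard : Allk.ncard = Fintype.card α ^ k := ncard_allk k
  have hpow : 1 ≤ Fintype.card α ^ k := Nat.one_le_pow _ _ (by omega)
  have key : {S : Set (List α) | ∃ w : List α, NearlyUniv α k w ∧ ScatFact k w = S}
      = (fun u => Allk \ {u}) '' Allk := by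
    ext S
    simp only [Set.mem_setOf_eq, Set.mem_image]
    constructor
    · rintro ⟨w, hw, rfl⟩
      have hw' : (ScatFact k w).ncard = Fintype.card α ^ k - 1 := hw
      have hsub : ScatFact k w ⊆ Allk := fun v hv => hv.1
      have hs_fin : (ScatFact k w).Finite := hfin.subset hsub
      have h1 : (Allk \ ScatFact k w).ncard = 1 := by
        rw [Set.ncard_diff hsub hs_fin, hcard, hw']
        omega
      obtain ⟨u, hu⟩ := Set.ncard_eq_one.mp h1
      have huA : u ∈ Allk := by
        have : u ∈ Allk \ ScatFact k w := by rw [hu]; rfl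
        exact this.1
      exact ⟨u, huA, by rw [← hu, Set.diff_diff_cancel_left hsub]⟩
    · rintro ⟨u, huA, rfl⟩
      have huk : u.length = k := huA
      refine ⟨W u, ?_, scatFact_W hk huk⟩
      show (ScatFact k (W u)).ncard = Fintype.card α ^ k - 1
      rw [scatFact_W hk huk, ← hA, Set.ncard_diff_singleton_of_mem huA, hcard]
  rw [key, Set.ncard_image_of_injOn, hcard]
  intro u hu u' hu' h
  by_contra hne
  have h1 : u ∈ Allk \ {u'} := ⟨hu, hne⟩
  have h2 : Allk \ {u} = Allk \ {u'} := h
  rw [← h2] at h1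
  exact h1.2 rfl
end

section
/- Let Σ be a finite alphabet with σ := |Σ| ≥ 2, let k ≥ 1, and let w ∈ Σ* be nearly k-universal with arch factorization w = ar_1(w)⋯ar_{k−1}(w)·r(w). Fix i ∈ {1,…,k−1} and let α, β ∈ Σ* satisfy: the last letter of α equals m(w)[i]; alph(α[1..|α|−1]) = alph(inner_i(w)); inner_i(w) is a scattered factor of α[1..|α|−1]; |β| ≥ |r(w)|; and alph(β) = alph(r(w)). Then ar_1(w)⋯ar_{i−1}(w)·α·ar_{i+1}(w)⋯ar_{k−1}(w)·β is nearly k-universal. -/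
open List in
section
open List
open List
section
variable {α : Type*} [DecidableEq α]

def aft (c : α) : List α → List α
  | [] => []
  | d :: z => if d = c then z else aft c z

theorem aft_sublist (c : α) (z : List α) : aft c z <+ z := by
  induction z with
  | nil => simp [aft]
  | cons d z ih =>
    by_cases h : d = c
    · simp [aft, h]
    · simpa [aft, h] using ih.trans (List.sublist_cons_self d z)

theorem cons_sublist_iff' {c : α} {u z : List α} :
    (c :: u) <+ z ↔ c ∈ z ∧ u <+ aft c z := by
  induction z with
  | nil => simp
  | cons d z ih =>
    by_cases h : d = c
    · subst h
      simp only [aft, if_pos rfl, List.mem_cons, true_or, true_and]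
      constructor
      · intro hs
        cases hs with
        | cons _ hs => exact ((List.sublist_cons_self d u).trans hs)
        | cons_cons _ hs => exact hs
      · exact fun hs => List.cons_sublist_cons.mpr hs
    · rw [show aft c (d :: z) = aft c z by simp [aft, h]]
      constructor
      · intro hs
        cases hs with
        | cons _ hs => exact ⟨List.mem_cons_of_mem _ (ih.mp hs).1, (ih.mp hs).2⟩
        | cons_cons _ hs => exact absurd rfl h
      · rintro ⟨hc, hs⟩
        rcases List.mem_cons.mp hc with rfl | hc
        · exact absurd rfl h
        · exact (ih.mpr ⟨hc, hs⟩).cons d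

theorem aft_sublist_aft (c : α) {u v : List α} (h : u <+ v) :
    aft c u <+ aft c v := by
  induction h with
  | slnil => simp [aft]
  | cons d h ih =>
    by_cases hd : d = c
    · subst hd
      simp only [aft, if_pos rfl]
      exact ih.trans (aft_sublist d _)
    · simpa [aft, hd] using ih
  | cons_cons d h ih =>
    by_cases hd : d = c
    · subst hd; simpa [aft] using h
    · simpa [aft, hd] using ih

theorem aft_append_left {c : α} {p : List α} (q : List α) (h : c ∈ p) :
    aft c (p ++ q) = aft c p ++ q := by
  induction p with
  | nil => simp at h
  | cons d p ih =>
    by_cases hd : d = c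
    · simp [aft, hd]
    · rcases List.mem_cons.mp h with rfl | h
      · exact absurd rfl hd
      · simp [aft, hd, ih h]

theorem aft_append_right {c : α} {p : List α} (q : List α) (h : c ∉ p) :
    aft c (p ++ q) = aft c q := by
  induction p with
  | nil => simp
  | cons d p ih =>
    have hd : d ≠ c := fun e => h (by simp [e])
    simp only [List.cons_append, aft, if_neg hd]
    exact ih (fun hc => h (List.mem_cons_of_mem _ hc))

theorem aft_concat_self {c : α} {p : List α} (h : c ∉ p) :
    aft c (p ++ [c]) = [] := by
  rw [aft_append_right _ h]; simp [aft]
end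
set_option linter.unusedSectionVars false
section
variable {α : Type*} [DecidableEq α] [Fintype α]

def Univ (t : ℕ) (z : List α) : Prop := ∀ u : List α, u.length = t → u <+ z

def NU (t : ℕ) (z : List α) : Prop := ∃! u : List α, u.length = t ∧ ¬ u <+ z

theorem Univ.mono {t : ℕ} {z z' : List α} (h : z <+ z') (hU : Univ t z) : Univ t z' :=
  fun u hu => (hU u hu).trans h

theorem not_nu_zero (z : List α) : ¬ NU 0 z := by
  rintro ⟨u, ⟨hlen, hmiss⟩, -⟩
  exact hmiss (by rw [List.length_eq_zero_iff.mp hlen]; exact List.nil_sublist z)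

theorem nu_not_univ {t : ℕ} {z : List α} (h : NU t z) : ¬ Univ t z := by
  rintro hU
  obtain ⟨u, ⟨hlen, hmiss⟩, -⟩ := h
  exact hmiss (hU u hlen)

theorem univ_of_nu_aux {s : ℕ} {z : List α} {c : α} (h : Univ (s+1) z) (hc : c ∈ z) :
    Univ s (aft c z) := by
  intro v hv
  have := h (c :: v) (by simp [hv])
  exact (cons_sublist_iff'.mp this).2

/-- transfer of universality when replacing the "rest". -/
theorem univ_rest_transfer {r b : List α} (x : α) (hx : x ∉ r)
    (hrb : r.toFinset = b.toFinset) :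
    ∀ (t : ℕ) (p : List α), Univ t (p ++ r) → Univ t (p ++ b) := by
  intro t
  induction t with
  | zero => intro p _ u hu; rw [List.length_eq_zero_iff.mp hu]; exact List.nil_sublist _
  | succ s ih =>
    intro p hU u hu
    rcases u with _ | ⟨c, u'⟩
    · simp at hu
    have hu' : u'.length = s := by simpa using hu
    by_cases hcp : c ∈ p
    · have h1 : Univ s (aft c p ++ r) := by
        intro v hv
        have := univ_of_nu_aux (c := c) hU (by simp [hcp]) v hv
        rwa [aft_append_left _ hcp] at this
      have h2 := ih (aft c p) h1
      rw [cons_sublist_iff', aft_append_left _ hcp]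
      exact ⟨by simp [hcp], h2 u' hu'⟩
    · by_cases hcr : c ∈ r
      · have hcb : c ∈ b := by
          have : c ∈ r.toFinset := List.mem_toFinset.mpr hcr
          rw [hrb] at this; exact List.mem_toFinset.mp this
        rcases Nat.eq_zero_or_pos s with rfl | hs
        · rw [List.length_eq_zero_iff.mp hu']
          exact List.singleton_sublist.mpr (by simp [hcb])
        · exfalso
          have h3 := hU (c :: List.replicate s x) (by simp)
          have h4 := (cons_sublist_iff'.mp h3).2
          rw [aft_append_right _ hcp] at h4
          have : x ∈ aft c r := h4.subset (by
            simp [List.mem_replicate]; omega)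
          exact hx ((aft_sublist c r).subset this)
      · exfalso
        have h3 := hU (c :: u') hu
        have := (cons_sublist_iff'.mp h3).1
        simp only [List.mem_append] at this
        tauto

theorem nu_succ_iff {s : ℕ} {z : List α} (hfull : ∀ c : α, c ∈ z) :
    NU (s+1) z ↔ ∃ c₀ : α, NU s (aft c₀ z) ∧ ∀ c ≠ c₀, Univ s (aft c z) := by
  constructor
  · rintro ⟨u, ⟨hlen, hmiss⟩, huniq⟩
    rcases u with _ | ⟨c₀, u₀⟩
    · simp at hlen
    have hlen' : u₀.length = s := by simpa using hlen
    refine ⟨c₀, ⟨u₀, ⟨hlen', ?_⟩, ?_⟩, ?_⟩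
    · intro hs
      exact hmiss (cons_sublist_iff'.mpr ⟨hfull c₀, hs⟩)
    · rintro v ⟨hv, hvmiss⟩
      have : c₀ :: v = c₀ :: u₀ := huniq (c₀ :: v)
        ⟨by simp [hv], fun hs => hvmiss (cons_sublist_iff'.mp hs).2⟩
      simpa using this
    · intro c hc v hv
      by_contra hvm
      have heq : c :: v = c₀ :: u₀ := huniq (c :: v)
        ⟨by simp [hv], fun hs => hvm (cons_sublist_iff'.mp hs).2⟩
      injection heq with h1 h2
      exact hc h1
  · rintro ⟨c₀, ⟨u₀, ⟨hlen, hmiss⟩, huniq⟩, hother⟩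
    refine ⟨c₀ :: u₀, ⟨by simp [hlen], fun hs => hmiss (cons_sublist_iff'.mp hs).2⟩, ?_⟩
    rintro v ⟨hv, hvmiss⟩
    rcases v with _ | ⟨c, v'⟩
    · simp at hv
    have hv' : v'.length = s := by simpa using hv
    have hc : c = c₀ := by
      by_contra hne
      exact hvmiss (cons_sublist_iff'.mpr ⟨hfull c, hother c hne v' hv'⟩)
    subst hc
    have : v' = u₀ := huniq v' ⟨hv', fun hs => hvmiss (cons_sublist_iff'.mpr ⟨hfull c, hs⟩)⟩
    rw [this]
end
section
variable {α : Type*} [DecidableEq α] [Fintype α]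

def ArchGood (A : List α) : Prop :=
  A ≠ [] ∧ (∀ c : α, c ∈ A) ∧ ∀ c, A.getLast? = some c → c ∉ A.dropLast

def BRel (A A' : List α) : Prop :=
  A' ≠ [] ∧ A.getLast? = A'.getLast? ∧ A.dropLast.toFinset = A'.dropLast.toFinset ∧
    A.dropLast <+ A'.dropLast ∧ ArchGood A

theorem BRel.decomp {A A' : List α} (h : BRel A A') :
    ∃ D D' : List α, ∃ m : α, A = D ++ [m] ∧ A' = D' ++ [m] ∧ m ∉ D ∧ m ∉ D' ∧
      D.toFinset = D'.toFinset ∧ D <+ D' ∧ (∀ c : α, c ∈ D ∨ c = m) := by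
  obtain ⟨hA', hlast, htf, hsub, hA, hfull, hnot⟩ := h
  have hA1 : A = A.dropLast ++ [A.getLast hA] := (List.dropLast_append_getLast hA).symm
  have hA'1 : A' = A'.dropLast ++ [A'.getLast hA'] := (List.dropLast_append_getLast hA').symm
  have hm : A.getLast hA = A'.getLast hA' := by
    have h1 : A.getLast? = some (A.getLast hA) := List.getLast?_eq_getLast hA
    have h2 : A'.getLast? = some (A'.getLast hA') := List.getLast?_eq_getLast hA'
    rw [h1, h2] at hlast
    exact Option.some.inj hlast
  refine ⟨A.dropLast, A'.dropLast, A.getLast hA, hA1, by rw [hm]; exact hA'1, ?_, ?_, htf, hsub, ?_⟩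
  · exact hnot _ (List.getLast?_eq_getLast hA)
  · intro hmem
    have : A.getLast hA ∈ A.dropLast.toFinset := by rw [htf]; exact List.mem_toFinset.mpr (hm ▸ hmem)
    exact hnot _ (List.getLast?_eq_getLast hA) (List.mem_toFinset.mp this)
  · intro c
    have := hfull c
    rw [hA1, List.mem_append, List.mem_singleton] at this
    exact this

theorem BRel.sublist {A A' : List α} (h : BRel A A') : A <+ A' := by
  obtain ⟨D, D', m, rfl, rfl, -, -, -, hsub, -⟩ := h.decomp
  exact hsub.append (List.Sublist.refl [m])

theorem flatten_sublist_flatten {L L' : List (List α)}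
    (h : List.Forall₂ (· <+ ·) L L') : L.flatten <+ L'.flatten := by
  induction h with
  | nil => simp
  | cons h _ ih => simpa using h.append ih

theorem transfer (hcard : ∃ y z : α, y ≠ z) :
    ∀ (t : ℕ) (P P' : List (List α)) (r b : List α),
    List.Forall₂ BRel P P' → r.toFinset = b.toFinset →
    ¬ ((Finset.univ : Finset α) ⊆ r.toFinset) →
    NU t (P.flatten ++ r) → NU t (P'.flatten ++ b) := by
  intro t P P' r b hF
  induction hF generalizing t with
  | nil =>
    intro hrb hnr hNU
    simp only [List.flatten_nil, List.nil_append] at hNU ⊢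
    obtain ⟨x, -, hx⟩ := Finset.not_subset.mp hnr
    rw [List.mem_toFinset] at hx
    match t with
    | 0 => exact absurd hNU (not_nu_zero r)
    | 1 =>
      obtain ⟨u, ⟨hlen, hmiss⟩, huniq⟩ := hNU
      obtain ⟨c₀, rfl⟩ := List.length_eq_one_iff.mp hlen
      have hc₀r : c₀ ∉ r := fun h => hmiss (List.singleton_sublist.mpr h)
      have hc₀b : c₀ ∉ b := fun h => hc₀r (List.mem_toFinset.mp (hrb ▸ List.mem_toFinset.mpr h))
      refine ⟨[c₀], ⟨rfl, fun h => hc₀b (List.singleton_sublist.mp h)⟩, ?_⟩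
      rintro v ⟨hv, hvmiss⟩
      obtain ⟨c, rfl⟩ := List.length_eq_one_iff.mp hv
      have hcb : c ∉ b := fun h => hvmiss (List.singleton_sublist.mpr h)
      have hcr : c ∉ r := fun h => hcb (List.mem_toFinset.mp (hrb.symm ▸ List.mem_toFinset.mpr h))
      exact huniq [c] ⟨rfl, fun h => hcr (List.singleton_sublist.mp h)⟩
    | (s+2) =>
      exfalso
      obtain ⟨u, ⟨hlen, hmiss⟩, huniq⟩ := hNU
      obtain ⟨y, z, hyz⟩ := hcard
      have key : ∀ v : List α, v.length = s + 1 → ¬ (x :: v) <+ r := by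
        intro v hv hs
        exact hx ((cons_sublist_iff'.mp hs).1)
      have h1 := huniq (x :: List.replicate (s+1) y) ⟨by simp, key _ (by simp)⟩
      have h2 := huniq (x :: List.replicate (s+1) z) ⟨by simp, key _ (by simp)⟩
      rw [← h2] at h1
      injection h1 with _ h1
      rw [List.replicate_succ, List.replicate_succ] at h1
      injection h1 with hy _
      exact hyz hy
  | @cons A A' Ps Ps' hAA' hF ih =>
    intro hrb hnr hNU
    obtain ⟨D, D', m, hAeq, hA'eq, hmD, hmD', hDtf, hDsub, hDfull⟩ := hAA'.decomp
    obtain ⟨x, -, hx⟩ := Finset.not_subset.mp hnr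
    rw [List.mem_toFinset] at hx
    set W : List α := Ps.flatten ++ r with hW
    set W' : List α := Ps'.flatten ++ b with hW'
    have hz : (A :: Ps).flatten ++ r = D ++ ([m] ++ W) := by
      simp [hAeq, List.append_assoc, hW]
    have hz' : (A' :: Ps').flatten ++ b = D' ++ ([m] ++ W') := by
      simp [hA'eq, List.append_assoc, hW']
    rw [hz] at hNU
    rw [hz']
    match t with
    | 0 => exact absurd hNU (not_nu_zero _)
    | (s+1) =>
      have hfull : ∀ c : α, c ∈ D ++ ([m] ++ W) := by
        intro c
        rcases hDfull c with h | rfl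
        · exact List.mem_append_left _ h
        · exact List.mem_append_right _ (by simp)
      have hfull' : ∀ c : α, c ∈ D' ++ ([m] ++ W') := by
        intro c
        rcases hDfull c with h | rfl
        · exact List.mem_append_left _ (List.mem_toFinset.mp (hDtf ▸ List.mem_toFinset.mpr h))
        · exact List.mem_append_right _ (by simp)
      rw [nu_succ_iff hfull] at hNU
      obtain ⟨c₀, hc₀, hother⟩ := hNU
      have haftm : aft m (D ++ ([m] ++ W)) = W := by
        rw [aft_append_right _ hmD]; simp [aft]
      have haftm' : aft m (D' ++ ([m] ++ W')) = W' := by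
        rw [aft_append_right _ hmD']; simp [aft]
      have hc₀m : c₀ = m := by
        by_contra hne
        have hUW : Univ s W := by
          have := hother m (fun h => hne h.symm)
          rwa [haftm] at this
        have hc₀D : c₀ ∈ D := by
          rcases hDfull c₀ with h | rfl
          · exact h
          · exact absurd rfl hne
        have : aft c₀ (D ++ ([m] ++ W)) = aft c₀ D ++ ([m] ++ W) :=
          aft_append_left _ hc₀D
        have hUz : Univ s (aft c₀ (D ++ ([m] ++ W))) := by
          rw [this]
          exact hUW.mono (List.sublist_append_right (aft c₀ D ++ [m]) W |>.trans
            (by rw [List.append_assoc]))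
        exact nu_not_univ hc₀ hUz
      subst hc₀m
      rw [haftm] at hc₀
      have hNW' : NU s W' := ih s hrb hnr hc₀
      rw [nu_succ_iff hfull']
      refine ⟨c₀, by rwa [haftm'], ?_⟩
      intro c hc
      have hcD : c ∈ D := by
        rcases hDfull c with h | rfl
        · exact h
        · exact absurd rfl hc
      have hcD' : c ∈ D' := List.mem_toFinset.mp (hDtf ▸ List.mem_toFinset.mpr hcD)
      have hUc : Univ s (aft c D ++ ([c₀] ++ W)) := by
        have := hother c hc
        rwa [aft_append_left _ hcD] at this
      have hPsub : Ps.flatten <+ Ps'.flatten :=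
        flatten_sublist_flatten (hF.imp (fun _ _ h => h.sublist))
      have step1 : Univ s (aft c D' ++ ([c₀] ++ (Ps'.flatten ++ r))) := by
        refine hUc.mono ?_
        exact (aft_sublist_aft c hDsub).append
          ((List.Sublist.refl [c₀]).append (hPsub.append (List.Sublist.refl r)))
      have step2 : Univ s ((aft c D' ++ ([c₀] ++ Ps'.flatten)) ++ b) := by
        apply univ_rest_transfer x hx hrb s (aft c D' ++ ([c₀] ++ Ps'.flatten))
        simpa [List.append_assoc] using step1
      rw [aft_append_left _ hcD']
      simpa [List.append_assoc] using step2
end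
section
variable {α : Type*} [Fintype α] [DecidableEq α]

theorem archesAux_not_full {z : List α} (h : ¬ (Finset.univ : Finset α) ⊆ z.toFinset)
    (fuel : ℕ) : archesAux fuel z = ([], z) := by
  cases fuel with
  | zero => rfl
  | succ f => simp only [archesAux, if_neg h]

theorem archesAux_nil (hne : (Finset.univ : Finset α).Nonempty) (fuel : ℕ) :
    archesAux fuel ([] : List α) = ([], []) := by
  apply archesAux_not_full
  simp only [List.toFinset_nil]
  intro h
  exact hne.ne_empty (Finset.subset_empty.mp h)

theorem sInf_facts (hne : (Finset.univ : Finset α).Nonempty) {z : List α}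
    (hz : (Finset.univ : Finset α) ⊆ z.toFinset) :
    (Finset.univ : Finset α) ⊆ (z.take (sInf {n | (Finset.univ : Finset α) ⊆ (z.take n).toFinset})).toFinset ∧
    0 < sInf {n | (Finset.univ : Finset α) ⊆ (z.take n).toFinset} ∧
    sInf {n | (Finset.univ : Finset α) ⊆ (z.take n).toFinset} ≤ z.length := by
  have hmemS : z.length ∈ {n | (Finset.univ : Finset α) ⊆ (z.take n).toFinset} := by
    simp only [Set.mem_setOf_eq, List.take_length]; exact hz
  have hmem := Nat.sInf_mem (⟨z.length, hmemS⟩ :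
    {n | (Finset.univ : Finset α) ⊆ (z.take n).toFinset}.Nonempty)
  refine ⟨hmem, ?_, Nat.sInf_le hmemS⟩
  rcases Nat.eq_zero_or_pos (sInf {n | (Finset.univ : Finset α) ⊆ (z.take n).toFinset}) with h0 | h
  · exfalso
    rw [h0] at hmem
    simp only [Set.mem_setOf_eq, List.take_zero, List.toFinset_nil] at hmem
    exact hne.ne_empty (Finset.subset_empty.mp hmem)
  · exact h

theorem archesAux_congr (hne : (Finset.univ : Finset α).Nonempty) :
    ∀ (fuel : ℕ) {fuel' : ℕ} {z : List α}, z.length ≤ fuel → z.length ≤ fuel' →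
      archesAux fuel z = archesAux fuel' z := by
  intro fuel
  induction fuel with
  | zero =>
    intro fuel' z h h'
    have hz : z = [] := List.length_eq_zero_iff.mp (Nat.le_zero.mp h)
    subst hz
    rw [archesAux_nil hne, archesAux_nil hne]
  | succ f ihf =>
    intro fuel' z h h'
    cases fuel' with
    | zero =>
      have hz : z = [] := List.length_eq_zero_iff.mp (Nat.le_zero.mp h')
      subst hz
      rw [archesAux_nil hne, archesAux_nil hne]
    | succ f' =>
      by_cases hz : (Finset.univ : Finset α) ⊆ z.toFinset
      · obtain ⟨-, hpos, hle⟩ := sInf_facts hne hz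
        simp only [archesAux, if_pos hz]
        rw [ihf (fuel' := f') (by rw [List.length_drop]; omega) (by rw [List.length_drop]; omega)]
      · rw [archesAux_not_full hz, archesAux_not_full hz]

theorem arch_unfold (hne : (Finset.univ : Finset α).Nonempty) {z : List α}
    (hz : (Finset.univ : Finset α) ⊆ z.toFinset) :
    archList z = z.take (sInf {n | (Finset.univ : Finset α) ⊆ (z.take n).toFinset}) ::
        archList (z.drop (sInf {n | (Finset.univ : Finset α) ⊆ (z.take n).toFinset})) ∧
      rest z = rest (z.drop (sInf {n | (Finset.univ : Finset α) ⊆ (z.take n).toFinset})) := by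
  obtain ⟨hmem, hpos, hle⟩ := sInf_facts hne hz
  set n := sInf {n | (Finset.univ : Finset α) ⊆ (z.take n).toFinset} with hn
  have hzne : z ≠ [] := by
    rintro rfl
    simp only [List.toFinset_nil] at hz
    exact hne.ne_empty (Finset.subset_empty.mp hz)
  obtain ⟨l, hl⟩ : ∃ l, z.length = l + 1 :=
    ⟨z.length - 1, by have := List.length_pos_iff.mpr hzne; omega⟩
  have e1 : archesAux z.length z
      = (z.take n :: (archesAux (z.drop n).length (z.drop n)).1,
         (archesAux (z.drop n).length (z.drop n)).2) := by
    rw [hl]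
    simp only [archesAux, if_pos hz, ← hn]
    rw [archesAux_congr hne l (by rw [List.length_drop]; omega) (le_refl _)]
  constructor
  · show (archesAux z.length z).1 = _
    rw [e1]
    rfl
  · show (archesAux z.length z).2 = _
    rw [e1]
    rfl

theorem arch_struct (hne : (Finset.univ : Finset α).Nonempty) (z : List α) :
    z = (archList z).flatten ++ rest z ∧ (∀ A ∈ archList z, ArchGood A) ∧
      ¬ ((Finset.univ : Finset α) ⊆ (rest z).toFinset) := by
  obtain ⟨N, hN⟩ : ∃ N, z.length ≤ N := ⟨z.length, le_refl _⟩
  induction N generalizing z with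
  | zero =>
    have hz : z = [] := List.length_eq_zero_iff.mp (Nat.le_zero.mp hN)
    subst hz
    have h0 : archList ([] : List α) = [] := by
      show (archesAux _ _).1 = _; rw [archesAux_nil hne]
    have h1 : rest ([] : List α) = [] := by
      show (archesAux _ _).2 = _; rw [archesAux_nil hne]
    refine ⟨by simp [h0, h1], by simp [h0], by
      rw [h1]; simp only [List.toFinset_nil]
      intro h; exact hne.ne_empty (Finset.subset_empty.mp h)⟩
  | succ N ihN =>
    by_cases hz : (Finset.univ : Finset α) ⊆ z.toFinset
    · obtain ⟨hmem, hpos, hle⟩ := sInf_facts hne hz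
      obtain ⟨hL, hR⟩ := arch_unfold hne hz
      set n := sInf {n | (Finset.univ : Finset α) ⊆ (z.take n).toFinset} with hn
      have hdz : (z.drop n).length ≤ N := by simp; omega
      obtain ⟨ih1, ih2, ih3⟩ := ihN (z.drop n) hdz
      have htake : z.take n = z.take (n-1) ++ [z[n-1]'(by omega)] := by
        conv_lhs => rw [show n = (n-1) + 1 by omega]
        rw [List.take_succ]
        congr 1
        rw [List.getElem?_eq_getElem (by omega)]
        rfl
      have hgood : ArchGood (z.take n) := by
        refine ⟨?_, ?_, ?_⟩
        · have hlen : 0 < (z.take n).length := by rw [List.length_take]; omega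
          exact List.ne_nil_of_length_pos hlen
        · intro c
          have : c ∈ (z.take n).toFinset := hmem (Finset.mem_univ c)
          exact List.mem_toFinset.mp this
        · intro c hc hcmem
          rw [htake, List.getLast?_concat] at hc
          rw [htake, List.dropLast_concat] at hcmem
          have hsub : (Finset.univ : Finset α) ⊆ (z.take (n-1)).toFinset := by
            intro x _
            have hx : x ∈ (z.take n).toFinset := hmem (Finset.mem_univ x)
            rw [htake, List.toFinset_append] at hx
            rcases Finset.mem_union.mp hx with h | h
            · exact h
            · simp only [List.toFinset_cons, List.toFinset_nil] at h
              have : x = z[n-1]'(by omega) := by simpa using h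
              rw [this, Option.some.inj hc]
              exact List.mem_toFinset.mpr hcmem
          have : (n-1) ∈ {m | (Finset.univ : Finset α) ⊆ (z.take m).toFinset} := hsub
          exact absurd this (Nat.notMem_of_lt_sInf (by omega))
      refine ⟨?_, ?_, by rwa [hR]⟩
      · conv_lhs => rw [← List.take_append_drop n z]
        rw [hL, List.flatten_cons, List.append_assoc, hR, ← ih1]
      · intro A hA
        rw [hL] at hA
        rcases List.mem_cons.mp hA with rfl | hA
        · exact hgood
        · exact ih2 A hA
    · have h0 : archList z = [] := by
        show (archesAux _ _).1 = _; rw [archesAux_not_full hz]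
      have h1 : rest z = z := by
        show (archesAux _ _).2 = _; rw [archesAux_not_full hz]
      exact ⟨by simp [h0, h1], by simp [h0], by rwa [h1]⟩
end
section
variable {α : Type*} [Fintype α] [DecidableEq α]

theorem nearly_iff_nu (hσ : 2 ≤ Fintype.card α) {k : ℕ} (hk : 1 ≤ k) (w : List α) :
    NearlyUniv α k w ↔ NU k w := by
  classical
  set W : Set (List α) := {u : List α | u.length = k} with hWdef
  have hWr : W = Set.range (fun f : Fin k → α => List.ofFn f) := by
    ext u
    constructor
    · intro hu
      have hu' : u.length = k := hu
      refine ⟨fun i => u.get (Fin.cast hu'.symm i), ?_⟩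
      revert hu hu'
      intro hu hu'
      subst hu'
      simp only [Fin.cast_refl]
      exact List.ofFn_get u
    · rintro ⟨f, rfl⟩
      simp [hWdef]
  have hWfin : W.Finite := by rw [hWr]; exact Set.finite_range _
  have hWcard : W.ncard = Fintype.card α ^ k := by
    rw [hWr, ← Set.image_univ, Set.ncard_image_of_injective _ List.ofFn_injective,
      Set.ncard_univ, Nat.card_eq_fintype_card, Fintype.card_fun]
    simp
  set M : Set (List α) := {u : List α | u.length = k ∧ ¬ u <+ w} with hMdef
  have hunion : ScatFact k w ∪ M = W := by
    ext u
    simp only [ScatFact, hMdef, hWdef, Set.mem_union, Set.mem_setOf_eq]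
    by_cases h : u <+ w <;> tauto
  have hdisj : Disjoint (ScatFact k w) M := by
    rw [Set.disjoint_left]
    rintro u ⟨-, hs⟩ ⟨-, hns⟩
    exact hns hs
  have hsub1 : ScatFact k w ⊆ W := fun u hu => hu.1
  have hsub2 : M ⊆ W := fun u hu => hu.1
  have hsum : (ScatFact k w).ncard + M.ncard = Fintype.card α ^ k := by
    rw [← hWcard, ← hunion]
    exact (Set.ncard_union_eq hdisj (hWfin.subset hsub1) (hWfin.subset hsub2)).symm
  have hpow : 2 ≤ Fintype.card α ^ k :=
    Nat.one_lt_pow (by omega) hσ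
  have hMnu : M.ncard = 1 ↔ NU k w := by
    rw [Set.ncard_eq_one]
    constructor
    · rintro ⟨u, hu⟩
      have humem : u ∈ M := by rw [hu]; rfl
      exact ⟨u, humem, fun v hv => by
        have : v ∈ ({u} : Set (List α)) := hu ▸ hv
        exact this⟩
    · rintro ⟨u, hu, huniq⟩
      refine ⟨u, ?_⟩
      ext v
      exact ⟨fun hv => huniq v hv, fun hv => hv ▸ hu⟩
  unfold NearlyUniv
  rw [← hMnu]
  omega

end

theorem stmt_13' {α : Type*} [Fintype α] [DecidableEq α]
    (hσ : 2 ≤ Fintype.card α) {k : ℕ} (hk : 1 ≤ k)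
    (w : List α) (hw : NearlyUniv α k w)
    {i : ℕ} (hi1 : 1 ≤ i) (hi2 : i ≤ k - 1) (a b : List α)
    (ha0 : a ≠ [])
    (ha1 : a.getLast? = (arch w i).getLast?)
    (ha2 : alph a.dropLast = alph (arch w i).dropLast)
    (ha3 : (arch w i).dropLast.Sublist a.dropLast)
    (hb1 : (rest w).length ≤ b.length)
    (hb2 : alph b = alph (rest w)) :
    NearlyUniv α k
      (((archList w).take (i-1)).flatten ++ a ++ ((archList w).drop i).flatten ++ b) := by
  classical
  have hpos : 0 < Fintype.card α := by omega
  have hnea : Nonempty α := Fintype.card_pos_iff.mp hpos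
  have hne : (Finset.univ : Finset α).Nonempty := Finset.univ_nonempty
  have hcard : ∃ y z : α, y ≠ z := Fintype.exists_pair_of_one_lt_card (by omega)
  obtain ⟨hweq, hgood, hnr⟩ := arch_struct hne w
  set L := archList w with hL
  -- the index is in range
  have hiL : i - 1 < L.length := by
    by_contra hcon
    have h1 : arch w i = [] := List.getD_eq_default L [] (by omega)
    rw [h1] at ha1
    simp only [List.getLast?_nil] at ha1
    exact ha0 (List.getLast?_eq_none_iff.mp ha1)
  have hAi : arch w i = L[i-1] := List.getD_eq_getElem L [] hiL
  -- BRel for the middle block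
  have hgoodAi : ArchGood (L[i-1]) := hgood _ (List.getElem_mem hiL)
  have hmid : BRel (L[i-1]) a := by
    refine ⟨ha0, ?_, ?_, ?_, hgoodAi⟩
    · rw [← hAi]; exact ha1.symm
    · rw [← hAi]; exact ha2.symm
    · rw [← hAi]; exact ha3
  have hrefl : ∀ A ∈ L, BRel A A := by
    intro A hA
    exact ⟨(hgood A hA).1, rfl, rfl, List.Sublist.refl _, hgood A hA⟩
  have hF : List.Forall₂ BRel L (L.take (i-1) ++ a :: L.drop i) := by
    conv_lhs => rw [← List.take_append_drop (i-1) L,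
      List.drop_eq_getElem_cons hiL, show i - 1 + 1 = i by omega]
    have h1 : List.Forall₂ BRel (L.take (i-1)) (L.take (i-1)) := by
      rw [List.forall₂_same]
      intro A hA
      exact hrefl A ((List.take_sublist _ _).subset hA)
    have h2 : List.Forall₂ BRel (L.drop i) (L.drop i) := by
      rw [List.forall₂_same]
      intro A hA
      exact hrefl A ((List.drop_sublist _ _).subset hA)
    exact List.rel_append h1 (List.Forall₂.cons hmid h2)
  have hNUw : NU k w := (nearly_iff_nu hσ hk w).mp hw
  rw [hweq] at hNUw
  have hNUw' : NU k ((L.take (i-1) ++ a :: L.drop i).flatten ++ b) :=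
    transfer hcard k L _ (rest w) b hF (by
      have : b.toFinset = (rest w).toFinset := hb2
      exact this.symm) hnr hNUw
  have heq : (L.take (i-1) ++ a :: L.drop i).flatten ++ b
      = (L.take (i-1)).flatten ++ a ++ (L.drop i).flatten ++ b := by
    simp [List.flatten_append, List.flatten_cons, List.append_assoc]
  rw [heq] at hNUw'
  exact (nearly_iff_nu hσ hk _).mpr hNUw'

end
/-- Replacement lemma: replacing the `i`-th arch of a nearly `k`-universal word
by a word `a` with the same last letter whose remaining part has the same
alphabet as, and contains as a scattered factor, the inner part of the arch, and
replacing the rest by a word `b` over the same alphabet of at least the same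
length, again yields a nearly `k`-universal word. -/
theorem stmt_13 {α : Type*} [Fintype α] [DecidableEq α]
    (hσ : 2 ≤ Fintype.card α) {k : ℕ} (hk : 1 ≤ k)
    (w : List α) (hw : NearlyUniv α k w)
    {i : ℕ} (hi1 : 1 ≤ i) (hi2 : i ≤ k - 1) (a b : List α)
    (ha0 : a ≠ [])
    (ha1 : a.getLast? = (arch w i).getLast?)
    (ha2 : alph a.dropLast = alph (arch w i).dropLast)
    (ha3 : (arch w i).dropLast.Sublist a.dropLast)
    (hb1 : (rest w).length ≤ b.length)
    (hb2 : alph b = alph (rest w)) :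
    NearlyUniv α k
      (((archList w).take (i-1)).flatten ++ a ++ ((archList w).drop i).flatten ++ b) := by
  exact stmt_13' hσ hk w hw (i := i) hi1 hi2 a b ha0 ha1 ha2 ha3 hb1 hb2
end

section
/- Let Σ be a finite alphabet with σ := |Σ| ≥ 2 and let k ≥ 1. For every u ∈ Σ^k, the ∼_k-congruence class consisting of all words w with ScatFact_k(w) = Σ^k ∖ {u} is infinite; more precisely, letting L be the minimal length of a nearly k-universal word with absent scattered factor u, for every n ≥ L there exists a nearly k-universal word of length n whose unique absent scattered factor of length k is u. -/
set_option linter.unusedSectionVars false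

section Aux
variable {α : Type*} [Fintype α] [DecidableEq α]

noncomputable def PL (a : α) : List α := (Finset.univ.erase a).toList

lemma mem_PL {a b : α} : b ∈ PL a ↔ b ≠ a := by
  simp [PL]

noncomputable def blocks (a : α) (n : ℕ) : List α := (List.replicate n (PL a)).flatten

lemma blocks_succ (a : α) (n : ℕ) : blocks a (n+1) = PL a ++ blocks a n := by
  simp [blocks, List.replicate_succ]

lemma not_mem_blocks (a : α) (n : ℕ) : a ∉ blocks a n := by
  intro h
  simp only [blocks, List.mem_flatten] at h
  obtain ⟨l, hl, hal⟩ := h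
  rw [List.mem_replicate] at hl
  rw [hl.2] at hal
  exact (mem_PL.mp hal) rfl

lemma cons_sublist_append_of_mem {x : α} {l s r : List α}
    (hx : x ∈ l) (hs : s.Sublist r) : (x :: s).Sublist (l ++ r) := by
  obtain ⟨l1, l2, rfl⟩ := List.append_of_mem hx
  rw [List.append_assoc]
  refine List.Sublist.trans ?_ (List.sublist_append_right l1 _)
  exact List.Sublist.cons₂ x (hs.trans (List.sublist_append_right l2 r))

lemma sublist_blocks {a : α} : ∀ (n : ℕ) (s : List α), (∀ x ∈ s, x ≠ a) →
    s.length ≤ n → s.Sublist (blocks a n) := by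
  intro n
  induction n with
  | zero => intro s _ h; simp [List.length_eq_zero_iff.mp (Nat.le_zero.mp h)]
  | succ m ih =>
    intro s hs hlen
    cases s with
    | nil => exact List.nil_sublist _
    | cons x s' =>
      rw [blocks_succ]
      refine cons_sublist_append_of_mem (mem_PL.mpr (hs x (by simp))) ?_
      exact ih s' (fun y hy => hs y (by simp [hy])) (by simpa using Nat.succ_le_succ_iff.mp hlen)

lemma cons_sublist_of_append {x : α} {s B r : List α} (hx : x ∉ B)
    (h : (x :: s).Sublist (B ++ r)) : (x :: s).Sublist r := by
  induction B with
  | nil => exact h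
  | cons b B' ih =>
    cases h with
    | cons _ h' => exact ih (fun m => hx (List.mem_cons_of_mem b m)) h'
    | cons_cons => exact absurd List.mem_cons_self hx

lemma split_first {a : α} : ∀ {s : List α}, a ∈ s →
    ∃ s₁ s₂, s = s₁ ++ a :: s₂ ∧ a ∉ s₁ := by
  intro s
  induction s with
  | nil => intro h; simp at h
  | cons x s' ih =>
    intro h
    by_cases hxa : x = a
    · exact ⟨[], s', by simp [hxa], by simp⟩
    · obtain ⟨s₁, s₂, rfl, hns⟩ := ih (by
        rcases List.mem_cons.mp h with h|h
        · exact absurd h.symm hxa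
        · exact h)
      refine ⟨x :: s₁, s₂, by simp, ?_⟩
      simp only [List.mem_cons]
      rintro (h|h)
      · exact hxa h.symm
      · exact hns h

/-- witness word whose length-|u| scattered factors are everything except u -/
noncomputable def wrd : List α → List α
  | [] => []
  | [a] => PL a
  | a :: b :: t => blocks a (t.length + 2) ++ a :: wrd (b :: t)

lemma main_lemma (hσ : 2 ≤ Fintype.card α) :
    ∀ (u : List α), u ≠ [] →
    ScatFact u.length (wrd u) = {v : List α | v.length = u.length} \ {u} := by
  intro u
  induction u with
  | nil => intro h; exact absurd rfl h
  | cons a t ih =>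
    intro _
    cases t with
    | nil =>
      -- base case u = [a], wrd = PL a
      ext v
      simp only [ScatFact, Set.mem_setOf_eq, Set.mem_diff, Set.mem_singleton_iff,
        List.length_cons, List.length_nil, Nat.zero_add, wrd]
      constructor
      · rintro ⟨hlen, hsub⟩
        refine ⟨hlen, ?_⟩
        obtain ⟨x, rfl⟩ := List.length_eq_one_iff.mp hlen
        rw [List.singleton_sublist] at hsub
        intro hxa
        exact (mem_PL.mp hsub) (by injection hxa)
      · rintro ⟨hlen, hne⟩
        refine ⟨hlen, ?_⟩
        obtain ⟨x, rfl⟩ := List.length_eq_one_iff.mp hlen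
        rw [List.singleton_sublist]
        exact mem_PL.mpr (fun h => hne (by rw [h]))
    | cons b t' =>
      -- step case: u = a :: t with t = b :: t' nonempty
      set t : List α := b :: t' with ht
      have ih' := ih (by simp [ht])
      have present : ∀ s : List α, s.length = t.length → s ≠ t → s.Sublist (wrd t) := by
        intro s hs hne
        have : s ∈ ScatFact t.length (wrd t) := by
          rw [ih']; exact ⟨hs, hne⟩
        exact this.2
      have absent : ¬ t.Sublist (wrd t) := by
        intro h
        have : t ∈ ScatFact t.length (wrd t) := ⟨rfl, h⟩
        rw [ih'] at this
        exact this.2 rfl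
      have univ2 : ∀ y : List α, y.length + 1 ≤ t.length → y.Sublist (wrd t) := by
        intro y hy
        obtain ⟨c, hc⟩ := Fintype.exists_ne_of_one_lt_card (by omega) b
        set z : List α := c :: (y ++ List.replicate (t.length - 1 - y.length) c) with hz
        have hzlen : z.length = t.length := by
          simp [hz]; omega
        have hzne : z ≠ t := by
          rw [ht, hz]; intro h; injection h with h1 _; exact hc h1
        have hyz : y.Sublist z := by
          refine List.Sublist.trans ?_ (List.sublist_cons_self c _)
          exact List.sublist_append_left _ _
        exact hyz.trans (present z hzlen hzne)
      -- the word
      have hwrd : wrd (a :: t) = blocks a (t.length + 1) ++ a :: wrd t := by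
        rw [ht]; rfl
      ext v
      simp only [ScatFact, Set.mem_setOf_eq, Set.mem_diff, Set.mem_singleton_iff]
      constructor
      · rintro ⟨hlen, hsub⟩
        refine ⟨hlen, ?_⟩
        rintro rfl
        rw [hwrd] at hsub
        have h2 := cons_sublist_of_append (not_mem_blocks a _) hsub
        cases h2 with
        | cons _ h' => exact absent ((List.sublist_cons_self a t).trans h')
        | cons_cons _ h' => exact absent h'
      · rintro ⟨hlen, hne⟩
        refine ⟨hlen, ?_⟩
        rw [hwrd]
        cases v with
        | nil => simp at hlen
        | cons x s =>
          have hslen : s.length = t.length := by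
            simpa using hlen
          by_cases hxa : x = a
          · subst hxa
            have hst : s ≠ t := fun h => hne (by rw [h])
            refine List.Sublist.trans ?_ (List.sublist_append_right (blocks x (t.length + 1)) _)
            exact List.Sublist.cons₂ x (present s hslen hst)
          · rw [blocks_succ, List.append_assoc]
            refine cons_sublist_append_of_mem (mem_PL.mpr hxa) ?_
            by_cases ha : a ∈ s
            · obtain ⟨s₁, s₂, rfl, hns⟩ := split_first ha
              have hl : s₁.length + (s₂.length + 1) = t.length := by
                simpa using hslen
              refine List.Sublist.append ?_ ?_
              · exact sublist_blocks _ s₁ (fun y hy h => hns (h ▸ hy)) (by omega)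
              · exact List.Sublist.cons₂ a (univ2 s₂ (by omega))
            · refine List.Sublist.trans ?_ (List.sublist_append_left _ _)
              exact sublist_blocks _ s (fun y hy h => ha (h ▸ hy)) (by omega)

end Aux

lemma ext_lemma {α : Type*} [DecidableEq α] {k : ℕ} {u₁ b : α} {u' w : List α}
    (hu : (u₁ :: u').length = k)
    (h : ScatFact k w = {v : List α | v.length = k} \ {u₁ :: u'})
    (hb : b ≠ u₁) :
    ScatFact k (b :: w) = {v : List α | v.length = k} \ {u₁ :: u'} := by
  ext v
  simp only [ScatFact, Set.mem_setOf_eq, Set.mem_diff, Set.mem_singleton_iff]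
  constructor
  · rintro ⟨hlen, hsub⟩
    refine ⟨hlen, ?_⟩
    rintro rfl
    have hsw : (u₁ :: u').Sublist w := by
      cases hsub with
      | cons _ h' => exact h'
      | cons_cons _ h' => exact absurd rfl hb
    have : (u₁ :: u') ∈ ScatFact k w := ⟨hu, hsw⟩
    rw [h] at this
    exact this.2 rfl
  · rintro ⟨hlen, hne⟩
    have : v ∈ ScatFact k w := by
      rw [h]; exact ⟨hlen, hne⟩
    exact ⟨hlen, this.2.trans (List.sublist_cons_self b w)⟩

lemma rep_lemma {α : Type*} [DecidableEq α] {k : ℕ} {u₁ b : α} {u' w : List α}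
    (hu : (u₁ :: u').length = k)
    (h : ScatFact k w = {v : List α | v.length = k} \ {u₁ :: u'})
    (hb : b ≠ u₁) :
    ∀ m : ℕ, ScatFact k (List.replicate m b ++ w) =
      {v : List α | v.length = k} \ {u₁ :: u'} := by
  intro m
  induction m with
  | zero => simpa using h
  | succ n ih =>
    rw [List.replicate_succ, List.cons_append]
    exact ext_lemma hu ih hb

/-- Each congruence class of nearly `k`-universal words is infinite: for every
`u ∈ Σ^k` and every `n` at least the minimal length `L` of a nearly `k`-universal
word with absent factor `u`, there is such a word of length exactly `n`. -/
theorem stmt_14 {α : Type*} [Fintype α] [DecidableEq α]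
    (hσ : 2 ≤ Fintype.card α) {k : ℕ} (hk : 1 ≤ k)
    (u : List α) (hu : u.length = k) :
    {w : List α | ScatFact k w = {v : List α | v.length = k} \ {u}}.Infinite ∧
    ∀ L : ℕ,
      IsLeast {n : ℕ | ∃ w : List α, w.length = n ∧
          ScatFact k w = {v : List α | v.length = k} \ {u}} L →
      ∀ n : ℕ, L ≤ n →
        ∃ w : List α, w.length = n ∧
          ScatFact k w = {v : List α | v.length = k} \ {u} := by
  cases u with
  | nil => simp at hu; omega
  | cons u₁ u' =>
    obtain ⟨b, hb⟩ := Fintype.exists_ne_of_one_lt_card (by omega) u₁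
    have hw0 : ScatFact k (wrd (u₁ :: u')) =
        {v : List α | v.length = k} \ {u₁ :: u'} := by
      have := main_lemma hσ (u₁ :: u') (by simp)
      rwa [hu] at this
    constructor
    · refine Set.infinite_of_injective_forall_mem
        (f := fun m : ℕ => List.replicate m b ++ wrd (u₁ :: u')) ?_ ?_
      · intro m n hmn
        have := congrArg List.length hmn
        simpa using this
      · intro m
        exact rep_lemma hu hw0 hb m
    · rintro L ⟨⟨w, hwL, hwS⟩, -⟩ n hn
      refine ⟨List.replicate (n - L) b ++ w, ?_, rep_lemma hu hwS hb (n - L)⟩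
      simp [hwL]
      omega
end
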